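/- arXiv:2112.09963 — 5 statements merged into one kernel-verified Lean document; each statement's English description precedes it below -/
import Mathlib

section
/- Assume λ_1,…,λ_d ∈ (0,1] and continuous strictly increasing functions φ_0,…,φ_{2d} : [0,1] → [0,1] have the Kolmogorov superposition property. Then for every continuous function f : [0,1]^d → ℝ and every ε > 0 there exists a Lipschitz continuous function g' : [0,d] → ℝ such that the function K(x_1,…,x_d) := Σ_{q=0}^{2d} g'(Σ_{i=1}^d λ_i φ_q(x_i)) satisfies sup_{x ∈ [0,1]^d} |f(x) − K(x)| ≤ ε. In other words, the class of K-Lipschitz continuous functions is dense in C([0,1]^d). -/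
/-- The class of K-Lipschitz continuous functions is dense in `C([0,1]^d)`:
if `(λ, φ)` has the Kolmogorov superposition property, then for every continuous
`f : [0,1]^d → ℝ` and every `ε > 0` there is a Lipschitz continuous outer function `g'`
on `[0,d]` whose Kolmogorov superposition approximates `f` within `ε` uniformly. -/
theorem kolmogorov_lipschitz_dense
    (d : ℕ) (hd : 1 ≤ d)
    (lam : Fin d → ℝ) (hlam : ∀ i, lam i ∈ Set.Ioc (0 : ℝ) 1)
    (φ : Fin (2 * d + 1) → ℝ → ℝ)
    (hφc : ∀ q, ContinuousOn (φ q) (Set.Icc 0 1))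
    (hφm : ∀ q, StrictMonoOn (φ q) (Set.Icc 0 1))
    (hφmap : ∀ q, ∀ t ∈ Set.Icc (0 : ℝ) 1, φ q t ∈ Set.Icc (0 : ℝ) 1)
    (hKSP : ∀ f : (Fin d → ℝ) → ℝ, ContinuousOn f (Set.Icc 0 1) →
      ∃ g : ℝ → ℝ, ContinuousOn g (Set.Icc 0 (d : ℝ)) ∧
        ∀ x ∈ Set.Icc (0 : Fin d → ℝ) 1,
          f x = ∑ q : Fin (2 * d + 1), g (∑ i, lam i * φ q (x i)))
    (f : (Fin d → ℝ) → ℝ) (hf : ContinuousOn f (Set.Icc 0 1))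
    (ε : ℝ) (hε : 0 < ε) :
    ∃ (g' : ℝ → ℝ) (C : NNReal), LipschitzOnWith C g' (Set.Icc 0 (d : ℝ)) ∧
      ∀ x ∈ Set.Icc (0 : Fin d → ℝ) 1,
        |f x - ∑ q : Fin (2 * d + 1), g' (∑ i, lam i * φ q (x i))| ≤ ε := by
  obtain ⟨g, hgc, hgrep⟩ := hKSP f hf
  set δ : ℝ := ε / (2 * d + 1) with hδdef
  have hδ : 0 < δ := by positivity
  obtain ⟨p, hp⟩ := exists_polynomial_near_of_continuousOn 0 (d : ℝ) g hgc δ hδ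
  -- Lipschitz constant for p on [0, d]
  obtain ⟨M, hM⟩ := IsCompact.exists_bound_of_continuousOn isCompact_Icc
    (Continuous.continuousOn ((Polynomial.continuous p.derivative)))
  refine ⟨fun t => p.eval t, M.toNNReal, ?_, ?_⟩
  · apply (convex_Icc _ _).lipschitzOnWith_of_nnnorm_deriv_le
      (fun x _ => (Polynomial.differentiable p).differentiableAt)
    intro x hx
    rw [Polynomial.deriv]
    rw [← NNReal.coe_le_coe, coe_nnnorm, Real.coe_toNNReal']
    exact (hM x hx).trans (le_max_left _ _)
  · intro x hx
    have hy : ∀ q : Fin (2 * d + 1), (∑ i, lam i * φ q (x i)) ∈ Set.Icc (0 : ℝ) (d : ℝ) := by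
      intro q
      have hxi : ∀ i, x i ∈ Set.Icc (0 : ℝ) 1 := fun i => ⟨hx.1 i, hx.2 i⟩
      have hterm : ∀ i, lam i * φ q (x i) ∈ Set.Icc (0 : ℝ) 1 := by
        intro i
        have hφi := hφmap q (x i) (hxi i)
        have hl := hlam i
        constructor
        · exact mul_nonneg hl.1.le hφi.1
        · calc lam i * φ q (x i) ≤ 1 * 1 :=
                mul_le_mul hl.2 hφi.2 hφi.1 zero_le_one
            _ = 1 := by ring
      constructor
      · exact Finset.sum_nonneg fun i _ => (hterm i).1
      · calc ∑ i, lam i * φ q (x i) ≤ ∑ _i : Fin d, (1 : ℝ) :=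
              Finset.sum_le_sum fun i _ => (hterm i).2
          _ = d := by simp
    rw [hgrep x hx, ← Finset.sum_sub_distrib]
    calc |∑ q : Fin (2 * d + 1), (g (∑ i, lam i * φ q (x i)) -
            Polynomial.eval (∑ i, lam i * φ q (x i)) p)|
        ≤ ∑ q : Fin (2 * d + 1), |g (∑ i, lam i * φ q (x i)) -
            Polynomial.eval (∑ i, lam i * φ q (x i)) p| :=
          Finset.abs_sum_le_sum_abs _ _
      _ ≤ ∑ _q : Fin (2 * d + 1), δ := by
          refine Finset.sum_le_sum fun q _ => ?_
          rw [abs_sub_comm]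
          exact (hp _ (hy q)).le
      _ = ε := by
          simp only [Finset.sum_const, Finset.card_univ, Fintype.card_fin, nsmul_eq_mul, hδdef]
          field_simp
          push_cast
          ring
end

section
/- Let d ≥ 1 and n ≥ 1 be integers, let λ_1,…,λ_d ∈ (0,1], and let φ_0,…,φ_{2d} : [0,1] → [0,1] be continuous monotone increasing functions. Suppose f : [0,1]^d → ℝ satisfies f(x_1,…,x_d) = Σ_{q=0}^{2d} g(Σ_{i=1}^d λ_i φ_q(x_i)) for all x ∈ [0,1]^d, where g : [0,d] → ℝ is Lipschitz continuous with Lipschitz constant C_f. Then there exist continuous piecewise linear functions L_0,…,L_{2d} : [0,1] → ℝ, each with at most n breakpoints, and a continuous piecewise linear function S : ℝ → ℝ with at most dn+1 breakpoints, such that sup_{x ∈ [0,1]^d} | f(x) − Σ_{q=0}^{2d} S(Σ_{i=1}^d λ_i L_q(x_i)) | ≤ C_f (2d+1)² / n. -/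
/-- `s` is a continuous piecewise linear function on `I` with at most `k` breakpoints:
there are at most `k` points such that `s` is affine on every subinterval of `I`
whose interior contains none of these points. -/
def PWLinOn (s : ℝ → ℝ) (I : Set ℝ) (k : ℕ) : Prop :=
  ContinuousOn s I ∧ ∃ u : Finset ℝ, u.card ≤ k ∧
    ∀ x ∈ I, ∀ y ∈ I, (∀ z ∈ u, z ∉ Set.Ioo x y) →
      ∃ a b : ℝ, ∀ t ∈ Set.Icc x y, s t = a * t + b

open Finset Set


noncomputable def ramp (p q t : ℝ) : ℝ := min (max (t - p) 0) (q - p)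

lemma ramp_continuous (p q : ℝ) : Continuous (ramp p q) := by
  unfold ramp; fun_prop

lemma ramp_of_le (p q t : ℝ) (hpq : p ≤ q) (h : t ≤ p) : ramp p q t = 0 := by
  unfold ramp
  rw [max_eq_right (by linarith), min_eq_left (by linarith)]

lemma ramp_of_ge (p q t : ℝ) (hpq : p ≤ q) (h : q ≤ t) : ramp p q t = q - p := by
  unfold ramp
  rw [max_eq_left (by linarith), min_eq_right (by linarith)]

lemma ramp_of_mem (p q t : ℝ) (h1 : p ≤ t) (h2 : t ≤ q) : ramp p q t = t - p := by
  unfold ramp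
  rw [max_eq_left (by linarith), min_eq_left (by linarith)]

noncomputable def PL (m : ℕ) (p : ℕ → ℝ) (b : ℕ → ℝ) (v0 : ℝ) (t : ℝ) : ℝ :=
  v0 + ∑ j ∈ Finset.range m, b j * ramp (p j) (p (j+1)) t

lemma PL_continuous (m : ℕ) (p b : ℕ → ℝ) (v0 : ℝ) : Continuous (PL m p b v0) := by
  unfold PL
  exact continuous_const.add (continuous_finset_sum _ fun j _ =>
    continuous_const.mul (ramp_continuous _ _))

lemma PL_below (m : ℕ) (p b : ℕ → ℝ) (v0 t : ℝ) (hp : Monotone p) (h : t ≤ p 0) :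
    PL m p b v0 t = v0 := by
  unfold PL
  rw [Finset.sum_eq_zero, add_zero]
  intro j _
  rw [ramp_of_le _ _ _ (hp (Nat.le_succ j)) (h.trans (hp (Nat.zero_le j))), mul_zero]

lemma PL_above (m : ℕ) (p b : ℕ → ℝ) (v0 t : ℝ) (hp : Monotone p) (h : p m ≤ t) :
    PL m p b v0 t = v0 + ∑ j ∈ Finset.range m, b j * (p (j+1) - p j) := by
  unfold PL
  congr 1
  apply Finset.sum_congr rfl
  intro j hj
  rw [Finset.mem_range] at hj
  rw [ramp_of_ge _ _ _ (hp (Nat.le_succ j)) ((hp (show j + 1 ≤ m from hj)).trans h)]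

lemma PL_cell (m : ℕ) (p b : ℕ → ℝ) (v0 : ℝ) (k : ℕ) (t : ℝ) (hp : Monotone p) (hk : k < m)
    (h1 : p k ≤ t) (h2 : t ≤ p (k+1)) :
    PL m p b v0 t = (v0 + ∑ j ∈ Finset.range k, b j * (p (j+1) - p j)) + b k * (t - p k) := by
  unfold PL
  rw [add_assoc]
  congr 1
  have h0 : ∑ j ∈ Finset.range m, b j * ramp (p j) (p (j+1)) t
      = ∑ j ∈ Finset.range (k+1), b j * ramp (p j) (p (j+1)) t := by
    symm
    apply Finset.sum_subset (Finset.range_subset_range.2 hk)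
    intro j _ hj
    rw [Finset.mem_range, not_lt] at hj
    rw [ramp_of_le _ _ _ (hp (Nat.le_succ j)) (h2.trans (hp hj)), mul_zero]
  rw [h0, Finset.sum_range_succ, ramp_of_mem _ _ _ h1 h2]
  congr 1
  apply Finset.sum_congr rfl
  intro j hj
  rw [Finset.mem_range] at hj
  rw [ramp_of_ge _ _ _ (hp (Nat.le_succ j)) ((hp (show j + 1 ≤ k from hj)).trans h1)]

lemma find_cell (m : ℕ) (p : ℕ → ℝ) (hp : Monotone p) (hm : 1 ≤ m)
    (x y : ℝ) (hx : p 0 ≤ x) (hxy : x ≤ y) (hy : y ≤ p m)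
    (havoid : ∀ j, 0 < j → j < m → p j ∉ Set.Ioo x y) :
    ∃ k, k < m ∧ p k ≤ x ∧ y ≤ p (k+1) := by
  classical
  set k := Nat.findGreatest (fun j => p j ≤ x) (m - 1) with hk
  have hkle : k ≤ m - 1 := Nat.findGreatest_le _
  have hpk : p k ≤ x := Nat.findGreatest_spec (P := fun j => p j ≤ x) (Nat.zero_le _) hx
  refine ⟨k, by omega, hpk, ?_⟩
  by_contra h
  push_neg at h
  have h1 : k + 1 < m := by
    by_contra h1
    have := hp (show m ≤ k + 1 by omega)
    linarith
  have hx' : x < p (k+1) := by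
    by_contra h2
    push_neg at h2
    exact Nat.findGreatest_is_greatest (P := fun j => p j ≤ x) (Nat.lt_succ_self k) (by omega) h2
  exact havoid (k+1) (Nat.succ_pos k) h1 ⟨hx', h⟩

lemma PL_pwlin_Icc (m : ℕ) (p b : ℕ → ℝ) (v0 : ℝ) (hp : Monotone p) (hm : 1 ≤ m) :
    PWLinOn (PL m p b v0) (Set.Icc (p 0) (p m)) m := by
  refine ⟨(PL_continuous m p b v0).continuousOn, (Finset.Ico 1 m).image p, ?_, ?_⟩
  · exact Finset.card_image_le.trans (by simp)
  · intro x hx y hy havoid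
    rcases le_or_gt x y with hxy | hxy
    · have havoid' : ∀ j, 0 < j → j < m → p j ∉ Set.Ioo x y := fun j hj0 hjm hmem =>
        havoid (p j) (Finset.mem_image_of_mem p (Finset.mem_Ico.2 ⟨hj0, hjm⟩)) hmem
      obtain ⟨k, hk, h1, h2⟩ := find_cell m p hp hm x y hx.1 hxy hy.2 havoid'
      refine ⟨b k, (v0 + ∑ j ∈ Finset.range k, b j * (p (j+1) - p j)) - b k * p k, ?_⟩
      intro t ht
      rw [PL_cell m p b v0 k t hp hk (h1.trans ht.1) (ht.2.trans h2)]
      ring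
    · exact ⟨0, 0, fun t ht => absurd (ht.1.trans ht.2) (not_le.2 hxy)⟩

lemma PL_pwlin_univ (m : ℕ) (p b : ℕ → ℝ) (v0 : ℝ) (hp : Monotone p) (hm : 1 ≤ m) :
    PWLinOn (PL m p b v0) Set.univ (m + 1) := by
  refine ⟨(PL_continuous m p b v0).continuousOn, (Finset.range (m+1)).image p, ?_, ?_⟩
  · exact Finset.card_image_le.trans (by simp)
  · intro x _ y _ havoid
    rcases le_or_gt x y with hxy | hxy
    · rcases le_or_gt y (p 0) with hy0 | hy0
      · exact ⟨0, v0, fun t ht => by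
          rw [PL_below m p b v0 t hp (ht.2.trans hy0)]; ring⟩
      rcases le_or_gt (p m) x with hxm | hxm
      · exact ⟨0, v0 + ∑ j ∈ Finset.range m, b j * (p (j+1) - p j), fun t ht => by
          rw [PL_above m p b v0 t hp (hxm.trans ht.1)]; ring⟩
      have hx0 : p 0 ≤ x := by
        by_contra h
        push_neg at h
        exact havoid (p 0) (Finset.mem_image_of_mem p (by simp)) ⟨h, hy0⟩
      have hym : y ≤ p m := by
        by_contra h
        push_neg at h
        exact havoid (p m) (Finset.mem_image_of_mem p (by simp)) ⟨hxm, h⟩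
      have havoid' : ∀ j, 0 < j → j < m → p j ∉ Set.Ioo x y := fun j _ hjm hmem =>
        havoid (p j) (Finset.mem_image_of_mem p (by simp; omega)) hmem
      obtain ⟨k, hk, h1, h2⟩ := find_cell m p hp hm x y hx0 hxy hym havoid'
      refine ⟨b k, (v0 + ∑ j ∈ Finset.range k, b j * (p (j+1) - p j)) - b k * p k, ?_⟩
      intro t ht
      rw [PL_cell m p b v0 k t hp hk (h1.trans ht.1) (ht.2.trans h2)]
      ring
    · exact ⟨0, 0, fun t ht => absurd (ht.1.trans ht.2) (not_le.2 hxy)⟩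

lemma inner_approx (n : ℕ) (hn : 1 ≤ n) (φ : ℝ → ℝ)
    (hc : ContinuousOn φ (Set.Icc 0 1)) (hmo : MonotoneOn φ (Set.Icc 0 1))
    (hmap : ∀ t ∈ Set.Icc (0:ℝ) 1, φ t ∈ Set.Icc (0:ℝ) 1) :
    ∃ L : ℝ → ℝ, PWLinOn L (Set.Icc 0 1) n ∧
      ∀ t ∈ Set.Icc (0:ℝ) 1, |L t - φ t| ≤ 1 / n := by
  have h01 : (0:ℝ) ∈ Set.Icc (0:ℝ) 1 := by simp
  have h11 : (1:ℝ) ∈ Set.Icc (0:ℝ) 1 := by simp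
  have hφ01 : φ 0 ≤ φ 1 := hmo h01 h11 zero_le_one
  have hnR : (0:ℝ) < n := by exact_mod_cast hn
  rcases eq_or_lt_of_le hφ01 with heq | hlt
  · -- constant case
    refine ⟨fun _ => φ 0, ⟨continuousOn_const, ∅, by simp, ?_⟩, ?_⟩
    · exact fun x _ y _ _ => ⟨0, φ 0, fun t _ => by ring⟩
    · intro t ht
      have h1 : φ 0 ≤ φ t := hmo h01 ht ht.1
      have h2 : φ t ≤ φ 1 := hmo ht h11 ht.2
      have : φ t = φ 0 := by linarith [heq]
      rw [this, sub_self, abs_zero]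
      positivity
  · set c : ℝ := (φ 1 - φ 0) / n with hc_def
    have hcpos : 0 < c := div_pos (by linarith) hnR
    have key : ∀ j : ℕ, j ≤ n → ∃ t, t ∈ Set.Icc (0:ℝ) 1 ∧ φ t = φ 0 + j * c := by
      intro j hj
      have hmem : φ 0 + j * c ∈ Set.Icc (φ 0) (φ 1) := by
        constructor
        · nlinarith [Nat.cast_nonneg (α := ℝ) j]
        · have : (j:ℝ) ≤ n := by exact_mod_cast hj
          have h2 : (j:ℝ) * c ≤ n * c := by nlinarith
          have hne : (n:ℝ) ≠ 0 := ne_of_gt hnR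
          have hnc : (n:ℝ) * c = φ 1 - φ 0 := by
            rw [hc_def]; field_simp
          linarith
      obtain ⟨t, ht, hφt⟩ := intermediate_value_Icc zero_le_one hc hmem
      exact ⟨t, ht, hφt⟩
    choose! tt htt1 htt2 using key
    set p : ℕ → ℝ := fun j => if j = 0 then 0 else if n ≤ j then 1 else tt j with hp_def
    have hpmem : ∀ j, j ≤ n → p j ∈ Set.Icc (0:ℝ) 1 := by
      intro j hj
      simp only [hp_def]
      split_ifs with h1 h2
      · exact h01
      · exact h11
      · exact htt1 j hj
    have hpval : ∀ j, j ≤ n → φ (p j) = φ 0 + j * c := by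
      intro j hj
      simp only [hp_def]
      split_ifs with h1 h2
      · simp [h1]
      · have hjn : j = n := le_antisymm hj h2
        have hne : (n:ℝ) ≠ 0 := ne_of_gt hnR
        have hnc : (n:ℝ) * c = φ 1 - φ 0 := by
          rw [hc_def]; field_simp
        rw [hjn, hnc]; ring
      · exact htt2 j hj
    have hpstrict : ∀ j k, j < k → k ≤ n → p j < p k := by
      intro j k hjk hk
      by_contra h
      push_neg at h
      have h1 : φ (p k) ≤ φ (p j) := hmo (hpmem k hk) (hpmem j (by omega)) h
      rw [hpval j (by omega), hpval k hk] at h1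
      have : (j:ℝ) < k := by exact_mod_cast hjk
      nlinarith
    have hp0 : p 0 = 0 := by simp [hp_def]
    have hpn : p n = 1 := by simp only [hp_def]; rw [if_neg (by omega), if_pos le_rfl]
    have hp : Monotone p := by
      apply monotone_nat_of_le_succ
      intro j
      rcases Nat.lt_or_ge j n with h1 | h1
      · exact (hpstrict j (j+1) (Nat.lt_succ_self j) h1).le
      · have e1 : p j = 1 := by
          simp only [hp_def]; rw [if_neg (by omega), if_pos h1]
        have e2 : p (j+1) = 1 := by
          simp only [hp_def]; rw [if_neg (by omega), if_pos (by omega)]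
        rw [e1, e2]
    set b : ℕ → ℝ := fun j => c / (p (j+1) - p j) with hb_def
    have hbval : ∀ j, j < n → b j * (p (j+1) - p j) = c := by
      intro j hj
      have hlt' := hpstrict j (j+1) (Nat.lt_succ_self j) hj
      have hne : p (j+1) - p j ≠ 0 := sub_ne_zero.2 hlt'.ne'
      simp only [hb_def]
      exact div_mul_cancel₀ c hne
    have hA : ∀ k, k ≤ n → ∑ j ∈ Finset.range k, b j * (p (j+1) - p j) = k * c := by
      intro k hk
      rw [Finset.sum_congr rfl fun j hj => hbval j (by
        rw [Finset.mem_range] at hj; omega)]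
      rw [Finset.sum_const, Finset.card_range, nsmul_eq_mul]
    refine ⟨PL n p b (φ 0), ?_, ?_⟩
    · have := PL_pwlin_Icc n p b (φ 0) hp hn
      rwa [hp0, hpn] at this
    · intro t ht
      obtain ⟨k, hk, h1, h2⟩ := find_cell n p hp hn t t (hp0 ▸ ht.1) le_rfl (hpn ▸ ht.2)
        (fun j _ _ => by simp)
      rw [PL_cell n p b (φ 0) k t hp hk h1 h2, hA k hk.le]
      have hΔ := hpstrict k (k+1) (Nat.lt_succ_self k) hk
      have hbpos : 0 < b k := by
        simp only [hb_def]
        exact div_pos hcpos (by linarith)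
      have hbk : 0 ≤ b k * (t - p k) := mul_nonneg hbpos.le (by linarith)
      have hbk2 : b k * (t - p k) ≤ c := by
        calc b k * (t - p k) ≤ b k * (p (k+1) - p k) :=
              mul_le_mul_of_nonneg_left (by linarith) hbpos.le
          _ = c := hbval k hk
      have hφt1 : φ 0 + k * c ≤ φ t := by
        rw [← hpval k hk.le]
        exact hmo (hpmem k hk.le) ht h1
      have hφt2 : φ t ≤ φ 0 + ((k:ℝ)+1) * c := by
        have h := hmo ht (hpmem (k+1) hk) h2
        rw [hpval (k+1) hk] at h
        push_cast at h
        linarith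
      have hφ0nn : (0:ℝ) ≤ φ 0 := (hmap 0 h01).1
      have hφ1le : φ 1 ≤ 1 := (hmap 1 h11).2
      have hcle : c ≤ 1 / n := by
        have he : (1:ℝ)/n - c = (1 - (φ 1 - φ 0))/n := by rw [hc_def]; ring
        have := div_nonneg (by linarith : (0:ℝ) ≤ 1 - (φ 1 - φ 0)) hnR.le
        linarith
      rw [abs_le]
      constructor <;> nlinarith

lemma outer_approx (d n : ℕ) (hd : 1 ≤ d) (hn : 1 ≤ n) (g : ℝ → ℝ) (Cf : ℝ)
    (hCf : 0 ≤ Cf)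
    (hg : ∀ s ∈ Set.Icc (0:ℝ) (d:ℝ), ∀ t ∈ Set.Icc (0:ℝ) (d:ℝ), |g s - g t| ≤ Cf * |s - t|) :
    ∃ S : ℝ → ℝ, PWLinOn S Set.univ (d * n + 1) ∧
      ∀ y : ℝ, ∀ y' ∈ Set.Icc (0:ℝ) (d:ℝ), |S y - g y'| ≤ Cf / n + Cf * |y - y'| := by
  have hnR : (0:ℝ) < n := by exact_mod_cast hn
  have hdR : (0:ℝ) < d := by exact_mod_cast hd
  set m : ℕ := d * n with hm_def
  have hm : 1 ≤ m := Nat.one_le_iff_ne_zero.2 (by positivity)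
  set p : ℕ → ℝ := fun j => (j : ℝ) / n with hp_def
  have hp : Monotone p := by
    intro a b hab
    simp only [hp_def]
    gcongr
  have hp0 : p 0 = 0 := by simp [hp_def]
  have hpm : p m = d := by
    simp only [hp_def, hm_def]
    push_cast
    field_simp
  set b : ℕ → ℝ := fun j => (n : ℝ) * (g (p (j+1)) - g (p j)) with hb_def
  have hΔ : ∀ j : ℕ, p (j+1) - p j = 1 / n := by
    intro j
    simp only [hp_def]
    push_cast
    field_simp
    ring
  have hA : ∀ k : ℕ, (0:ℝ) + ∑ j ∈ Finset.range k, b j * (p (j+1) - p j)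
      = g (p k) - g (p 0) := by
    intro k
    rw [zero_add]
    have : ∀ j ∈ Finset.range k, b j * (p (j+1) - p j) = g (p (j+1)) - g (p j) := by
      intro j _
      rw [hΔ j]
      simp only [hb_def]
      field_simp
    rw [Finset.sum_congr rfl this, Finset.sum_range_sub (fun j => g (p j))]
  have hAg : ∀ k : ℕ, g (p 0) + ∑ j ∈ Finset.range k, b j * (p (j+1) - p j) = g (p k) := by
    intro k
    have := hA k
    linarith
  set S : ℝ → ℝ := PL m p b (g (p 0)) with hS_def
  have hmemgrid : ∀ k : ℕ, k ≤ m → p k ∈ Set.Icc (0:ℝ) (d:ℝ) := by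
    intro k hk
    constructor
    · simp only [hp_def]; positivity
    · rw [← hpm]
      exact hp hk
  refine ⟨S, PL_pwlin_univ m p b (g (p 0)) hp hm, ?_⟩
  intro y y' hy'
  have key : |S y - g y'| ≤ Cf / n + Cf * |y - y'| := by
    rcases le_or_gt y 0 with hy0 | hy0
    · have hSy : S y = g (p 0) := PL_below m p b _ y hp (by rw [hp0]; exact hy0)
      rw [hSy, hp0]
      have h1 := hg 0 ⟨le_rfl, by positivity⟩ y' hy'
      have h2 : |(0:ℝ) - y'| ≤ |y - y'| := by
        rw [abs_sub_comm, abs_of_nonneg (by linarith [hy'.1] : (0:ℝ) ≤ y' - 0),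
          abs_sub_comm, abs_of_nonneg (by linarith [hy'.1] : (0:ℝ) ≤ y' - y)]
        linarith
      have : Cf * |(0:ℝ) - y'| ≤ Cf * |y - y'| := mul_le_mul_of_nonneg_left h2 hCf
      have hCfn : 0 ≤ Cf / n := by positivity
      linarith
    rcases le_or_gt (d:ℝ) y with hyd | hyd
    · have hSy : S y = g (p m) := by
        rw [hS_def, PL_above m p b _ y hp (by rw [hpm]; exact hyd), hAg m]
      rw [hSy, hpm]
      have h1 := hg d ⟨by positivity, le_rfl⟩ y' hy'
      have h2 : |(d:ℝ) - y'| ≤ |y - y'| := by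
        rw [abs_of_nonneg (by linarith [hy'.2] : (0:ℝ) ≤ (d:ℝ) - y'),
          abs_of_nonneg (by linarith [hy'.2] : (0:ℝ) ≤ y - y')]
        linarith
      have : Cf * |(d:ℝ) - y'| ≤ Cf * |y - y'| := mul_le_mul_of_nonneg_left h2 hCf
      have hCfn : 0 ≤ Cf / n := by positivity
      linarith
    · -- y ∈ (0, d)
      have hymem : y ∈ Set.Icc (0:ℝ) (d:ℝ) := ⟨hy0.le, hyd.le⟩
      obtain ⟨k, hk, h1, h2⟩ := find_cell m p hp hm y y (by rw [hp0]; exact hy0.le) le_rfl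
        (by rw [hpm]; exact hyd.le) (fun j _ _ => by simp)
      have hSy : S y = g (p k) + b k * (y - p k) := by
        rw [hS_def, PL_cell m p b _ k y hp hk h1 h2, hAg k]
      have hθ1 : 0 ≤ y - p k := by linarith
      have hθ2 : y - p k ≤ 1 / n := by
        have := hΔ k
        linarith
      have hgk := hg (p k) (hmemgrid k hk.le) y hymem
      have hgk1 := hg (p (k+1)) (hmemgrid (k+1) hk) y hymem
      have e1 : |p k - y| ≤ 1 / n := by
        rw [abs_of_nonpos (by linarith)]
        linarith
      have e2 : |p (k+1) - y| ≤ 1 / n := by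
        rw [abs_of_nonneg (by linarith [hΔ k])]
        linarith [hΔ k]
      have f1 : |g (p k) - g y| ≤ Cf / n := by
        calc |g (p k) - g y| ≤ Cf * |p k - y| := hgk
          _ ≤ Cf * (1/n) := mul_le_mul_of_nonneg_left e1 hCf
          _ = Cf / n := by ring
      have f2 : |g (p (k+1)) - g y| ≤ Cf / n := by
        calc |g (p (k+1)) - g y| ≤ Cf * |p (k+1) - y| := hgk1
          _ ≤ Cf * (1/n) := mul_le_mul_of_nonneg_left e2 hCf
          _ = Cf / n := by ring
      have hrewrite : S y - g y = (1 - (n:ℝ) * (y - p k)) * (g (p k) - g y)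
          + ((n:ℝ) * (y - p k)) * (g (p (k+1)) - g y) := by
        rw [hSy]
        simp only [hb_def]
        ring
      have hθa : 0 ≤ (n:ℝ) * (y - p k) := by positivity
      have hθb : (n:ℝ) * (y - p k) ≤ 1 := by
        have : (n:ℝ) * (y - p k) ≤ (n:ℝ) * (1/n) := mul_le_mul_of_nonneg_left hθ2 hnR.le
        rw [mul_one_div, div_self hnR.ne'] at this
        exact this
      have hSg : |S y - g y| ≤ Cf / n := by
        rw [hrewrite]
        calc |(1 - (n:ℝ) * (y - p k)) * (g (p k) - g y)
              + ((n:ℝ) * (y - p k)) * (g (p (k+1)) - g y)|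
            ≤ |(1 - (n:ℝ) * (y - p k)) * (g (p k) - g y)|
              + |((n:ℝ) * (y - p k)) * (g (p (k+1)) - g y)| := abs_add_le _ _
          _ = (1 - (n:ℝ) * (y - p k)) * |g (p k) - g y|
              + ((n:ℝ) * (y - p k)) * |g (p (k+1)) - g y| := by
              rw [abs_mul, abs_mul, abs_of_nonneg (by linarith), abs_of_nonneg hθa]
          _ ≤ (1 - (n:ℝ) * (y - p k)) * (Cf / n) + ((n:ℝ) * (y - p k)) * (Cf / n) := by
              apply add_le_add
              · exact mul_le_mul_of_nonneg_left f1 (by linarith)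
              · exact mul_le_mul_of_nonneg_left f2 hθa
          _ = Cf / n := by ring
      have hgy := hg y hymem y' hy'
      calc |S y - g y'| ≤ |S y - g y| + |g y - g y'| := by
            have := abs_add_le (S y - g y) (g y - g y')
            simpa using this
        _ ≤ Cf / n + Cf * |y - y'| := add_le_add hSg hgy
  exact key

/-- If `f` has a Kolmogorov representation with a `C_f`-Lipschitz outer
function `g`, then the Kolmogorov ReLU network `K_{n,n}` (piecewise linear `L_q` with at
most `n` breakpoints and `S` with at most `dn+1` breakpoints) approximates `f` uniformly
within `C_f (2d+1)² / n`. -/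
theorem kolmogorov_network_lipschitz_rate
    (d n : ℕ) (hd : 1 ≤ d) (hn : 1 ≤ n)
    (lam : Fin d → ℝ) (hlam : ∀ i, lam i ∈ Set.Ioc (0 : ℝ) 1)
    (φ : Fin (2 * d + 1) → ℝ → ℝ)
    (hφc : ∀ q, ContinuousOn (φ q) (Set.Icc 0 1))
    (hφm : ∀ q, MonotoneOn (φ q) (Set.Icc 0 1))
    (hφmap : ∀ q, ∀ t ∈ Set.Icc (0 : ℝ) 1, φ q t ∈ Set.Icc (0 : ℝ) 1)
    (g : ℝ → ℝ) (Cf : ℝ)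
    (hg : ∀ s ∈ Set.Icc (0 : ℝ) (d : ℝ), ∀ t ∈ Set.Icc (0 : ℝ) (d : ℝ),
      |g s - g t| ≤ Cf * |s - t|)
    (f : (Fin d → ℝ) → ℝ)
    (hf : ∀ x ∈ Set.Icc (0 : Fin d → ℝ) 1,
      f x = ∑ q : Fin (2 * d + 1), g (∑ i, lam i * φ q (x i))) :
    ∃ (L : Fin (2 * d + 1) → ℝ → ℝ) (S : ℝ → ℝ),
      (∀ q, PWLinOn (L q) (Set.Icc 0 1) n) ∧
      PWLinOn S Set.univ (d * n + 1) ∧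
      ∀ x ∈ Set.Icc (0 : Fin d → ℝ) 1,
        |f x - ∑ q : Fin (2 * d + 1), S (∑ i, lam i * L q (x i))| ≤
          Cf * (2 * (d : ℝ) + 1) ^ 2 / n := by
  have hnR : (0:ℝ) < n := by exact_mod_cast hn
  have hd1 : (1:ℝ) ≤ d := by exact_mod_cast hd
  have hCf : 0 ≤ Cf := by
    have h := hg 0 ⟨le_rfl, by linarith⟩ (d:ℝ) ⟨by linarith, le_rfl⟩
    rw [show |(0:ℝ) - (d:ℝ)| = (d:ℝ) by
      rw [abs_sub_comm, sub_zero, abs_of_nonneg (by linarith)]] at h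
    nlinarith [abs_nonneg (g 0 - g (d:ℝ))]
  have hL : ∀ q, ∃ Lq : ℝ → ℝ, PWLinOn Lq (Set.Icc 0 1) n ∧
      ∀ t ∈ Set.Icc (0:ℝ) 1, |Lq t - φ q t| ≤ 1 / n :=
    fun q => inner_approx n hn (φ q) (hφc q) (hφm q) (hφmap q)
  choose L hL1 hL2 using hL
  obtain ⟨S, hS1, hS2⟩ := outer_approx d n hd hn g Cf hCf hg
  refine ⟨L, S, hL1, hS1, ?_⟩
  intro x hx
  have hxi : ∀ i, x i ∈ Set.Icc (0:ℝ) 1 := fun i => ⟨hx.1 i, hx.2 i⟩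
  rw [hf x hx, ← Finset.sum_sub_distrib]
  have hterm : ∀ q : Fin (2 * d + 1),
      |g (∑ i, lam i * φ q (x i)) - S (∑ i, lam i * L q (x i))| ≤
        Cf / n + Cf * ((d:ℝ) / n) := by
    intro q
    set y' : ℝ := ∑ i, lam i * φ q (x i) with hy'_def
    set y : ℝ := ∑ i, lam i * L q (x i) with hy_def
    have hy'mem : y' ∈ Set.Icc (0:ℝ) (d:ℝ) := by
      constructor
      · apply Finset.sum_nonneg
        intro i _
        exact mul_nonneg (hlam i).1.le (hφmap q _ (hxi i)).1
      · calc y' ≤ ∑ _i : Fin d, (1:ℝ) := by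
              apply Finset.sum_le_sum
              intro i _
              have h1 := hlam i
              have h2 := hφmap q _ (hxi i)
              nlinarith [h1.1, h1.2, h2.1, h2.2]
          _ = d := by simp
    have hdiff : |y - y'| ≤ (d:ℝ) / n := by
      have he : y - y' = ∑ i, lam i * (L q (x i) - φ q (x i)) := by
        rw [hy_def, hy'_def, ← Finset.sum_sub_distrib]
        exact Finset.sum_congr rfl fun i _ => by ring
      rw [he]
      calc |∑ i, lam i * (L q (x i) - φ q (x i))|
          ≤ ∑ i, |lam i * (L q (x i) - φ q (x i))| := Finset.abs_sum_le_sum_abs _ _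
        _ ≤ ∑ _i : Fin d, 1 / (n:ℝ) := by
            apply Finset.sum_le_sum
            intro i _
            rw [abs_mul]
            have h1 := hlam i
            have h2 := hL2 q (x i) (hxi i)
            have h3 : |lam i| ≤ 1 := by rw [abs_of_pos h1.1]; exact h1.2
            calc |lam i| * |L q (x i) - φ q (x i)| ≤ 1 * (1/n) := by
                  apply mul_le_mul h3 h2 (abs_nonneg _) zero_le_one
              _ = 1 / n := one_mul _
        _ = (d:ℝ) / n := by
            rw [Finset.sum_const, Finset.card_univ, Fintype.card_fin, nsmul_eq_mul]
            ring
    have hkey := hS2 y y' hy'mem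
    rw [abs_sub_comm]
    calc |S y - g y'| ≤ Cf / n + Cf * |y - y'| := hkey
      _ ≤ Cf / n + Cf * ((d:ℝ)/n) := by
          have := mul_le_mul_of_nonneg_left hdiff hCf
          linarith
  calc |∑ q : Fin (2*d+1), (g (∑ i, lam i * φ q (x i)) - S (∑ i, lam i * L q (x i)))|
      ≤ ∑ q : Fin (2*d+1), |g (∑ i, lam i * φ q (x i)) - S (∑ i, lam i * L q (x i))| :=
        Finset.abs_sum_le_sum_abs _ _
    _ ≤ ∑ _q : Fin (2*d+1), (Cf / n + Cf * ((d:ℝ)/n)) :=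
        Finset.sum_le_sum fun q _ => hterm q
    _ = (2*(d:ℝ)+1) * (Cf / n + Cf * ((d:ℝ)/n)) := by
        rw [Finset.sum_const, Finset.card_univ, Fintype.card_fin, nsmul_eq_mul]
        push_cast
        ring
    _ ≤ Cf * (2 * (d : ℝ) + 1) ^ 2 / n := by
        have he : (2*(d:ℝ)+1) * (Cf / n + Cf * ((d:ℝ)/n))
            = Cf * ((2*(d:ℝ)+1) * (1 + d)) / n := by ring
        rw [he, div_le_div_iff₀ hnR hnR]
        have h1 : (0:ℝ) ≤ 2*(d:ℝ)+1 := by linarith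
        nlinarith [mul_nonneg hCf (mul_nonneg h1 (by linarith : (0:ℝ) ≤ (d:ℝ))), hnR]
end

section
/- Suppose f : [a,b] → ℝ (a < b) is continuous and of bounded variation with total variation V = V_a^b(f). Then for every integer n ≥ 1 there exist points a = t_0 ≤ t_1 ≤ … ≤ t_{n+1} = b and a continuous function s : [a,b] → ℝ that is affine on each subinterval [t_i, t_{i+1}], i = 0,…,n, such that sup_{x ∈ [a,b]} |f(x) − s(x)| ≤ V/(n+1). That is, the distance in the uniform norm from f to the space of continuous linear splines with n interior knots is at most V_a^b(f)/(n+1). -/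
open Set ENNReal Finset

lemma evar_partition_exists (f : ℝ → ℝ) (s : Set ℝ) {c : ℝ≥0∞}
    (h : c < eVariationOn f s) :
    ∃ (m : ℕ) (u : ℕ → ℝ), Monotone u ∧ (∀ i, u i ∈ s) ∧
      c < ∑ i ∈ Finset.range m, edist (f (u (i + 1))) (f (u i)) := by
  have h' : c < ⨆ p : ℕ × { u : ℕ → ℝ // Monotone u ∧ ∀ i, u i ∈ s },
      ∑ i ∈ Finset.range p.1, edist (f (p.2.1 (i + 1))) (f (p.2.1 i)) := h
  obtain ⟨⟨m, u, hu, hus⟩, hlt⟩ := lt_iSup_iff.1 h'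
  exact ⟨m, u, hu, hus, hlt⟩

lemma evar_right_small (f : ℝ → ℝ) {a b x : ℝ} (hax : a ≤ x) (hxb : x ≤ b)
    (hBV : BoundedVariationOn f (Set.Icc a b))
    (hfc : ContinuousOn f (Set.Icc a b))
    {ε : ℝ} (hε : 0 < ε) :
    ∃ δ > 0, ∀ z, x ≤ z → z ≤ b → z < x + δ →
      eVariationOn f (Set.Icc x z) ≤ ENNReal.ofReal ε := by
  have hsub : Set.Icc x b ⊆ Set.Icc a b := Set.Icc_subset_Icc hax le_rfl
  have hW : eVariationOn f (Set.Icc x b) ≠ ⊤ := hBV.mono hsub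
  by_cases htriv : eVariationOn f (Set.Icc x b) ≤ ENNReal.ofReal (ε/2)
  · refine ⟨1, one_pos, fun z hxz hzb _ => ?_⟩
    refine le_trans (le_trans (eVariationOn.mono f (Set.Icc_subset_Icc le_rfl hzb)) htriv) ?_
    exact ENNReal.ofReal_le_ofReal (by linarith)
  · push_neg at htriv
    have hW0 : eVariationOn f (Set.Icc x b) ≠ 0 := by
      intro h0; rw [h0] at htriv; exact (not_lt.2 zero_le) htriv
    have hsub2 : eVariationOn f (Set.Icc x b) - ENNReal.ofReal (ε/2)
        < eVariationOn f (Set.Icc x b) :=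
      ENNReal.sub_lt_self hW hW0 (by simp [ENNReal.ofReal_eq_zero]; linarith)
    obtain ⟨m, u, hu, hus, hS⟩ := evar_partition_exists f _ hsub2
    -- continuity at x
    have hcx : ContinuousWithinAt f (Set.Icc a b) x := hfc x ⟨hax, hxb⟩
    rw [Metric.continuousWithinAt_iff] at hcx
    set ε' : ℝ := ε / (4 * (m + 1)) with hε'def
    have hε' : 0 < ε' := by positivity
    obtain ⟨δ, hδ, hδf⟩ := hcx ε' hε'
    refine ⟨δ, hδ, fun z hxz hzb hzδ => ?_⟩
    -- the two auxiliary partitions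
    set w : ℕ → ℝ := fun i => max z (u i) with hwdef
    set mm : ℕ → ℝ := fun i => min z (u i) with hmmdef
    have hwmono : Monotone w := fun i j h => max_le_max le_rfl (hu h)
    have hmmmono : Monotone mm := fun i j h => min_le_min le_rfl (hu h)
    have hwmem : ∀ i, w i ∈ Set.Icc z b :=
      fun i => ⟨le_max_left _ _, max_le hzb (hus i).2⟩
    have hmmmem : ∀ i, mm i ∈ Set.Icc x z :=
      fun i => ⟨le_min hxz (hus i).1, min_le_left _ _⟩
    -- pointwise inequality
    have hptw : ∀ i, edist (f (u (i+1))) (f (u i)) ≤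
        edist (f (w (i+1))) (f (w i)) + edist (f (mm (i+1))) (f (mm i)) := by
      intro i
      have hui : u i ≤ u (i+1) := hu (Nat.le_succ i)
      rcases le_total (u (i+1)) z with h2 | h2
      · have h1 : u i ≤ z := hui.trans h2
        simp only [hwdef, hmmdef, max_eq_left h2, max_eq_left h1,
          min_eq_right h2, min_eq_right h1, edist_self, zero_add]
        exact le_rfl
      · rcases le_total (u i) z with h1 | h1
        · simp only [hwdef, hmmdef, max_eq_right h2, max_eq_left h1,
            min_eq_left h2, min_eq_right h1]
          exact edist_triangle _ _ _
        · simp only [hwdef, hmmdef, max_eq_right h2, max_eq_right h1,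
            min_eq_left h2, min_eq_left h1, edist_self, add_zero]
          exact le_rfl
    -- each mm-term is small
    have hmmterm : ∀ i, edist (f (mm (i+1))) (f (mm i)) ≤ ENNReal.ofReal (2 * ε') := by
      intro i
      have key : ∀ j, edist (f (mm j)) (f x) ≤ ENNReal.ofReal ε' := by
        intro j
        have hmem : mm j ∈ Set.Icc a b :=
          ⟨hax.trans (hmmmem j).1, (hmmmem j).2.trans hzb⟩
        have hdist : dist (mm j) x < δ := by
          rw [Real.dist_eq, abs_of_nonneg (by linarith [(hmmmem j).1])]
          have := (hmmmem j).2
          linarith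
        have := hδf hmem hdist
        rw [edist_dist]
        exact ENNReal.ofReal_le_ofReal this.le
      calc edist (f (mm (i+1))) (f (mm i))
          ≤ edist (f (mm (i+1))) (f x) + edist (f x) (f (mm i)) := edist_triangle _ _ _
        _ ≤ ENNReal.ofReal ε' + ENNReal.ofReal ε' := by
            refine add_le_add (key (i+1)) ?_
            rw [edist_comm]; exact key i
        _ = ENNReal.ofReal (2 * ε') := by rw [← ENNReal.ofReal_add hε'.le hε'.le]; ring_nf
    -- sum bounds
    have hsplit : ∑ i ∈ Finset.range m, edist (f (u (i+1))) (f (u i)) ≤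
        eVariationOn f (Set.Icc z b) + ENNReal.ofReal (ε/2) := by
      calc ∑ i ∈ Finset.range m, edist (f (u (i+1))) (f (u i))
          ≤ ∑ i ∈ Finset.range m, (edist (f (w (i+1))) (f (w i))
              + edist (f (mm (i+1))) (f (mm i))) :=
            Finset.sum_le_sum fun i _ => hptw i
        _ = (∑ i ∈ Finset.range m, edist (f (w (i+1))) (f (w i)))
              + ∑ i ∈ Finset.range m, edist (f (mm (i+1))) (f (mm i)) :=
            Finset.sum_add_distrib
        _ ≤ eVariationOn f (Set.Icc z b) + ENNReal.ofReal (ε/2) := by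
            refine add_le_add (eVariationOn.sum_le (f := f) (n := m) hwmono hwmem) ?_
            calc ∑ i ∈ Finset.range m, edist (f (mm (i+1))) (f (mm i))
                ≤ ∑ _i ∈ Finset.range m, ENNReal.ofReal (2 * ε') :=
                  Finset.sum_le_sum fun i _ => hmmterm i
              _ = m * ENNReal.ofReal (2 * ε') := by
                  rw [Finset.sum_const, Finset.card_range, nsmul_eq_mul]
              _ = ENNReal.ofReal (m * (2 * ε')) := by
                  rw [ENNReal.ofReal_mul (p := (m:ℝ)) (Nat.cast_nonneg m), ENNReal.ofReal_natCast]
              _ ≤ ENNReal.ofReal (ε/2) := by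
                  refine ENNReal.ofReal_le_ofReal ?_
                  rw [hε'def]
                  have hm1 : (0:ℝ) < (m:ℝ) + 1 := by positivity
                  have h1 : (m:ℝ)/((m:ℝ)+1) ≤ 1 := by
                    rw [div_le_one hm1]; linarith
                  calc (m:ℝ) * (2 * (ε / (4 * ((m:ℝ)+1))))
                      = ((m:ℝ)/((m:ℝ)+1)) * (ε/2) := by field_simp; ring
                    _ ≤ 1 * (ε/2) := mul_le_mul_of_nonneg_right h1 (by positivity)
                    _ = ε/2 := one_mul _
    -- combine
    have hWsum := eVariationOn.Icc_add_Icc f (s := Set.univ) hxz hzb (Set.mem_univ z)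
    simp only [Set.univ_inter] at hWsum
    have hB : eVariationOn f (Set.Icc z b) ≠ ⊤ :=
      hBV.mono (Set.Icc_subset_Icc (hax.trans hxz) le_rfl)
    have h4 : eVariationOn f (Set.Icc x b) - ENNReal.ofReal (ε/2)
        ≤ eVariationOn f (Set.Icc z b) + ENNReal.ofReal (ε/2) := (hS.trans_le hsplit).le
    have h5 : eVariationOn f (Set.Icc x b)
        ≤ eVariationOn f (Set.Icc z b) + ENNReal.ofReal (ε/2) + ENNReal.ofReal (ε/2) :=
      tsub_le_iff_right.1 h4
    rw [← hWsum, add_comm (eVariationOn f (Set.Icc x z)), add_assoc] at h5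
    have h6 := (ENNReal.add_le_add_iff_left hB).1 h5
    rwa [← ENNReal.ofReal_add (by linarith) (by linarith), add_halves] at h6

lemma evar_left_small (f : ℝ → ℝ) {a b x : ℝ} (hax : a ≤ x) (hxb : x ≤ b)
    (hBV : BoundedVariationOn f (Set.Icc a b))
    (hfc : ContinuousOn f (Set.Icc a b))
    {ε : ℝ} (hε : 0 < ε) :
    ∃ δ > 0, ∀ y, a ≤ y → y ≤ x → x - δ < y →
      eVariationOn f (Set.Icc y x) ≤ ENNReal.ofReal ε := by
  have hsub : Set.Icc a x ⊆ Set.Icc a b := Set.Icc_subset_Icc le_rfl hxb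
  have hW : eVariationOn f (Set.Icc a x) ≠ ⊤ := hBV.mono hsub
  by_cases htriv : eVariationOn f (Set.Icc a x) ≤ ENNReal.ofReal (ε/2)
  · refine ⟨1, one_pos, fun y hay hyx _ => ?_⟩
    refine le_trans (le_trans (eVariationOn.mono f (Set.Icc_subset_Icc hay le_rfl)) htriv) ?_
    exact ENNReal.ofReal_le_ofReal (by linarith)
  · push_neg at htriv
    have hW0 : eVariationOn f (Set.Icc a x) ≠ 0 := by
      intro h0; rw [h0] at htriv; exact (not_lt.2 zero_le) htriv
    have hsub2 : eVariationOn f (Set.Icc a x) - ENNReal.ofReal (ε/2)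
        < eVariationOn f (Set.Icc a x) :=
      ENNReal.sub_lt_self hW hW0 (by simp [ENNReal.ofReal_eq_zero]; linarith)
    obtain ⟨m, u, hu, hus, hS⟩ := evar_partition_exists f _ hsub2
    have hcx : ContinuousWithinAt f (Set.Icc a b) x := hfc x ⟨hax, hxb⟩
    rw [Metric.continuousWithinAt_iff] at hcx
    set ε' : ℝ := ε / (4 * (m + 1)) with hε'def
    have hε' : 0 < ε' := by positivity
    obtain ⟨δ, hδ, hδf⟩ := hcx ε' hε'
    refine ⟨δ, hδ, fun y hay hyx hyδ => ?_⟩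
    set w : ℕ → ℝ := fun i => min y (u i) with hwdef
    set mm : ℕ → ℝ := fun i => max y (u i) with hmmdef
    have hwmono : Monotone w := fun i j h => min_le_min le_rfl (hu h)
    have hmmmono : Monotone mm := fun i j h => max_le_max le_rfl (hu h)
    have hwmem : ∀ i, w i ∈ Set.Icc a y :=
      fun i => ⟨le_min hay (hus i).1, min_le_left _ _⟩
    have hmmmem : ∀ i, mm i ∈ Set.Icc y x :=
      fun i => ⟨le_max_left _ _, max_le hyx (hus i).2⟩
    have hptw : ∀ i, edist (f (u (i+1))) (f (u i)) ≤
        edist (f (w (i+1))) (f (w i)) + edist (f (mm (i+1))) (f (mm i)) := by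
      intro i
      have hui : u i ≤ u (i+1) := hu (Nat.le_succ i)
      rcases le_total y (u i) with h1 | h1
      · have h2 : y ≤ u (i+1) := h1.trans hui
        simp only [hwdef, hmmdef, min_eq_left h2, min_eq_left h1,
          max_eq_right h2, max_eq_right h1, edist_self, zero_add]
        exact le_rfl
      · rcases le_total y (u (i+1)) with h2 | h2
        · simp only [hwdef, hmmdef, min_eq_left h2, min_eq_right h1,
            max_eq_right h2, max_eq_left h1]
          exact le_trans (edist_triangle _ (f y) _) (le_of_eq (add_comm _ _))
        · simp only [hwdef, hmmdef, min_eq_right h2, min_eq_right h1,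
            max_eq_left h2, max_eq_left h1, edist_self, add_zero]
          exact le_rfl
    have hmmterm : ∀ i, edist (f (mm (i+1))) (f (mm i)) ≤ ENNReal.ofReal (2 * ε') := by
      intro i
      have key : ∀ j, edist (f (mm j)) (f x) ≤ ENNReal.ofReal ε' := by
        intro j
        have hmem : mm j ∈ Set.Icc a b :=
          ⟨hay.trans (hmmmem j).1, (hmmmem j).2.trans hxb⟩
        have hdist : dist (mm j) x < δ := by
          rw [Real.dist_eq, abs_of_nonpos (by linarith [(hmmmem j).2])]
          have := (hmmmem j).1
          linarith
        have := hδf hmem hdist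
        rw [edist_dist]
        exact ENNReal.ofReal_le_ofReal this.le
      calc edist (f (mm (i+1))) (f (mm i))
          ≤ edist (f (mm (i+1))) (f x) + edist (f x) (f (mm i)) := edist_triangle _ _ _
        _ ≤ ENNReal.ofReal ε' + ENNReal.ofReal ε' := by
            refine add_le_add (key (i+1)) ?_
            rw [edist_comm]; exact key i
        _ = ENNReal.ofReal (2 * ε') := by rw [← ENNReal.ofReal_add hε'.le hε'.le]; ring_nf
    have hsplit : ∑ i ∈ Finset.range m, edist (f (u (i+1))) (f (u i)) ≤
        eVariationOn f (Set.Icc a y) + ENNReal.ofReal (ε/2) := by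
      calc ∑ i ∈ Finset.range m, edist (f (u (i+1))) (f (u i))
          ≤ ∑ i ∈ Finset.range m, (edist (f (w (i+1))) (f (w i))
              + edist (f (mm (i+1))) (f (mm i))) :=
            Finset.sum_le_sum fun i _ => hptw i
        _ = (∑ i ∈ Finset.range m, edist (f (w (i+1))) (f (w i)))
              + ∑ i ∈ Finset.range m, edist (f (mm (i+1))) (f (mm i)) :=
            Finset.sum_add_distrib
        _ ≤ eVariationOn f (Set.Icc a y) + ENNReal.ofReal (ε/2) := by
            refine add_le_add (eVariationOn.sum_le (f := f) (n := m) hwmono hwmem) ?_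
            calc ∑ i ∈ Finset.range m, edist (f (mm (i+1))) (f (mm i))
                ≤ ∑ _i ∈ Finset.range m, ENNReal.ofReal (2 * ε') :=
                  Finset.sum_le_sum fun i _ => hmmterm i
              _ = m * ENNReal.ofReal (2 * ε') := by
                  rw [Finset.sum_const, Finset.card_range, nsmul_eq_mul]
              _ = ENNReal.ofReal (m * (2 * ε')) := by
                  rw [ENNReal.ofReal_mul (p := (m:ℝ)) (Nat.cast_nonneg m), ENNReal.ofReal_natCast]
              _ ≤ ENNReal.ofReal (ε/2) := by
                  refine ENNReal.ofReal_le_ofReal ?_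
                  rw [hε'def]
                  have hm1 : (0:ℝ) < (m:ℝ) + 1 := by positivity
                  have h1 : (m:ℝ)/((m:ℝ)+1) ≤ 1 := by
                    rw [div_le_one hm1]; linarith
                  calc (m:ℝ) * (2 * (ε / (4 * ((m:ℝ)+1))))
                      = ((m:ℝ)/((m:ℝ)+1)) * (ε/2) := by field_simp; ring
                    _ ≤ 1 * (ε/2) := mul_le_mul_of_nonneg_right h1 (by positivity)
                    _ = ε/2 := one_mul _
    have hWsum := eVariationOn.Icc_add_Icc f (s := Set.univ) hay hyx (Set.mem_univ y)
    simp only [Set.univ_inter] at hWsum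
    have hB : eVariationOn f (Set.Icc a y) ≠ ⊤ :=
      hBV.mono (Set.Icc_subset_Icc le_rfl (hyx.trans hxb))
    have h4 : eVariationOn f (Set.Icc a x) - ENNReal.ofReal (ε/2)
        ≤ eVariationOn f (Set.Icc a y) + ENNReal.ofReal (ε/2) := (hS.trans_le hsplit).le
    have h5 : eVariationOn f (Set.Icc a x)
        ≤ eVariationOn f (Set.Icc a y) + ENNReal.ofReal (ε/2) + ENNReal.ofReal (ε/2) :=
      tsub_le_iff_right.1 h4
    rw [← hWsum, add_assoc] at h5
    have h6 := (ENNReal.add_le_add_iff_left hB).1 h5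
    rwa [← ENNReal.ofReal_add (by linarith) (by linarith), add_halves] at h6

lemma vfun_cont (f : ℝ → ℝ) {a b : ℝ}
    (hBV : BoundedVariationOn f (Set.Icc a b))
    (hfc : ContinuousOn f (Set.Icc a b)) :
    ∀ x ∈ Set.Icc a b, ∀ ε > 0, ∃ δ > 0, ∀ y ∈ Set.Icc a b, dist y x < δ →
      dist ((eVariationOn f (Set.Icc a y)).toReal)
        ((eVariationOn f (Set.Icc a x)).toReal) < ε := by
  intro x hx ε hε
  obtain ⟨δ₁, hδ₁, h₁⟩ := evar_right_small f hx.1 hx.2 hBV hfc (half_pos hε)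
  obtain ⟨δ₂, hδ₂, h₂⟩ := evar_left_small f hx.1 hx.2 hBV hfc (half_pos hε)
  refine ⟨min δ₁ δ₂, lt_min hδ₁ hδ₂, fun y hy hdist => ?_⟩
  rcases le_total x y with hxy | hxy
  · have hsum := eVariationOn.Icc_add_Icc f (s := Set.univ) hx.1 hxy (Set.mem_univ x)
    simp only [Set.univ_inter] at hsum
    have hA : eVariationOn f (Set.Icc a x) ≠ ⊤ :=
      hBV.mono (Set.Icc_subset_Icc le_rfl hx.2)
    have hC : eVariationOn f (Set.Icc x y) ≠ ⊤ :=
      hBV.mono (Set.Icc_subset_Icc hx.1 hy.2)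
    have hCle : eVariationOn f (Set.Icc x y) ≤ ENNReal.ofReal (ε/2) := by
      refine h₁ y hxy hy.2 ?_
      have : |y - x| < δ₁ := lt_of_lt_of_le (by rwa [Real.dist_eq] at hdist) (min_le_left _ _)
      rw [abs_lt] at this; linarith [this.2]
    have htr : (eVariationOn f (Set.Icc a y)).toReal
        = (eVariationOn f (Set.Icc a x)).toReal + (eVariationOn f (Set.Icc x y)).toReal := by
      rw [← ENNReal.toReal_add hA hC, hsum]
    rw [Real.dist_eq, htr, add_sub_cancel_left,
      abs_of_nonneg ENNReal.toReal_nonneg]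
    calc (eVariationOn f (Set.Icc x y)).toReal ≤ ε/2 :=
          ENNReal.toReal_le_of_le_ofReal (by linarith) hCle
      _ < ε := by linarith
  · have hsum := eVariationOn.Icc_add_Icc f (s := Set.univ) hy.1 hxy (Set.mem_univ y)
    simp only [Set.univ_inter] at hsum
    have hA : eVariationOn f (Set.Icc a y) ≠ ⊤ :=
      hBV.mono (Set.Icc_subset_Icc le_rfl hy.2)
    have hC : eVariationOn f (Set.Icc y x) ≠ ⊤ :=
      hBV.mono (Set.Icc_subset_Icc hy.1 hx.2)
    have hCle : eVariationOn f (Set.Icc y x) ≤ ENNReal.ofReal (ε/2) := by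
      refine h₂ y hy.1 hxy ?_
      have : |y - x| < δ₂ := lt_of_lt_of_le (by rwa [Real.dist_eq] at hdist) (min_le_right _ _)
      rw [abs_lt] at this; linarith [this.1]
    have htr : (eVariationOn f (Set.Icc a x)).toReal
        = (eVariationOn f (Set.Icc a y)).toReal + (eVariationOn f (Set.Icc y x)).toReal := by
      rw [← ENNReal.toReal_add hA hC, hsum]
    rw [Real.dist_eq, htr]
    rw [show (eVariationOn f (Set.Icc a y)).toReal -
        ((eVariationOn f (Set.Icc a y)).toReal + (eVariationOn f (Set.Icc y x)).toReal)
        = -(eVariationOn f (Set.Icc y x)).toReal by ring, abs_neg,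
      abs_of_nonneg ENNReal.toReal_nonneg]
    calc (eVariationOn f (Set.Icc y x)).toReal ≤ ε/2 :=
          ENNReal.toReal_le_of_le_ofReal (by linarith) hCle
      _ < ε := by linarith

noncomputable def lsSlope (f : ℝ → ℝ) (τ : ℕ → ℝ) (k : ℕ) : ℝ :=
  (f (τ (k+1)) - f (τ k)) / (τ (k+1) - τ k)

noncomputable def lsSpline (f : ℝ → ℝ) (τ : ℕ → ℝ) (n : ℕ) : ℝ → ℝ :=
  fun x => f (τ 0) + ∑ i ∈ Finset.range (n+1),
    lsSlope f τ i * (max (τ i) (min (τ (i+1)) x) - τ i)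

lemma lsSlope_mul (f : ℝ → ℝ) (τ : ℕ → ℝ) (k : ℕ) :
    lsSlope f τ k * (τ (k+1) - τ k) = f (τ (k+1)) - f (τ k) := by
  by_cases h : τ (k+1) = τ k
  · simp [lsSlope, h]
  · exact div_mul_cancel₀ _ (sub_ne_zero.2 h)

lemma lsSpline_continuous (f : ℝ → ℝ) (τ : ℕ → ℝ) (n : ℕ) :
    Continuous (lsSpline f τ n) := by
  refine continuous_const.add (continuous_finset_sum _ fun i _ => ?_)
  exact continuous_const.mul
    ((continuous_const.max (continuous_const.min continuous_id)).sub continuous_const)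

lemma lsSpline_eval (f : ℝ → ℝ) (τ : ℕ → ℝ) (hτ : Monotone τ) {n k : ℕ} (hk : k ≤ n)
    {x : ℝ} (h1 : τ k ≤ x) (h2 : x ≤ τ (k+1)) :
    lsSpline f τ n x = f (τ k) + lsSlope f τ k * (x - τ k) := by
  have hsplit := Finset.sum_range_add_sum_Ico
    (fun i => lsSlope f τ i * (max (τ i) (min (τ (i+1)) x) - τ i))
    (Nat.succ_le_succ hk)
  have hIco : ∑ i ∈ Finset.Ico (k+1) (n+1),
      lsSlope f τ i * (max (τ i) (min (τ (i+1)) x) - τ i) = 0 := by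
    refine Finset.sum_eq_zero fun i hi => ?_
    have hki : k + 1 ≤ i := (Finset.mem_Ico.1 hi).1
    have hxi : x ≤ τ i := h2.trans (hτ hki)
    rw [min_eq_right (hxi.trans (hτ (Nat.le_succ i))), max_eq_left hxi, sub_self, mul_zero]
  have hk' : ∑ i ∈ Finset.range k,
      lsSlope f τ i * (max (τ i) (min (τ (i+1)) x) - τ i)
      = ∑ i ∈ Finset.range k, (f (τ (i+1)) - f (τ i)) := by
    refine Finset.sum_congr rfl fun i hi => ?_
    have hik : i + 1 ≤ k := Finset.mem_range.1 hi
    have hτx : τ (i+1) ≤ x := (hτ hik).trans h1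
    rw [min_eq_left hτx, max_eq_right (hτ (Nat.le_succ i)), lsSlope_mul]
  have hFk : lsSlope f τ k * (max (τ k) (min (τ (k+1)) x) - τ k)
      = lsSlope f τ k * (x - τ k) := by
    rw [min_eq_right h2, max_eq_right h1]
  rw [lsSpline, ← hsplit, hIco, Finset.sum_range_succ, hk',
    Finset.sum_range_sub (fun i => f (τ i)) k, hFk]
  ring

lemma lsSpline_err (f : ℝ → ℝ) (τ : ℕ → ℝ) (hτ : Monotone τ) {n k : ℕ} (hk : k ≤ n)
    {x D : ℝ} (h1 : τ k ≤ x) (h2 : x ≤ τ (k+1)) (hD : 0 ≤ D)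
    (hfl : |f x - f (τ k)| ≤ D) (hfr : |f x - f (τ (k+1))| ≤ D) :
    |f x - lsSpline f τ n x| ≤ D := by
  rw [lsSpline_eval f τ hτ hk h1 h2]
  rcases eq_or_lt_of_le (hτ (Nat.le_succ k) : τ k ≤ τ (k+1)) with he | hlt
  · have hx : x = τ k := le_antisymm (h2.trans he.symm.le) h1
    rw [hx, sub_self, mul_zero, add_zero, sub_self, abs_zero]
    exact hD
  · set θ := (x - τ k)/(τ (k+1) - τ k) with hθdef
    have hΔ : 0 < τ (k+1) - τ k := sub_pos.2 hlt
    have hθ0 : 0 ≤ θ := div_nonneg (by linarith) hΔ.le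
    have hθ1 : θ ≤ 1 := by rw [hθdef, div_le_one hΔ]; linarith
    have hkey : f x - (f (τ k) + lsSlope f τ k * (x - τ k))
        = (1-θ)*(f x - f (τ k)) + θ*(f x - f (τ (k+1))) := by
      rw [lsSlope, hθdef]
      field_simp
      ring
    rw [hkey]
    calc |(1-θ)*(f x - f (τ k)) + θ*(f x - f (τ (k+1)))|
        ≤ |(1-θ)*(f x - f (τ k))| + |θ*(f x - f (τ (k+1)))| := abs_add_le _ _
      _ = (1-θ)*|f x - f (τ k)| + θ*|f x - f (τ (k+1))| := by
          rw [abs_mul, abs_mul, abs_of_nonneg (by linarith : (0:ℝ) ≤ 1-θ),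
            abs_of_nonneg hθ0]
      _ ≤ (1-θ)*D + θ*D :=
          add_le_add (mul_le_mul_of_nonneg_left hfl (by linarith))
            (mul_le_mul_of_nonneg_left hfr hθ0)
      _ = D := by ring

lemma knots_exist (f : ℝ → ℝ) {a b : ℝ} (hab : a < b)
    (hBV : BoundedVariationOn f (Set.Icc a b))
    (hfc : ContinuousOn f (Set.Icc a b)) (n : ℕ) :
    ∃ τ : ℕ → ℝ, Monotone τ ∧ τ 0 = a ∧ (∀ k, n+1 ≤ k → τ k = b) ∧
      (∀ k, τ k ∈ Set.Icc a b) ∧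
      ∀ k, k ≤ n → (eVariationOn f (Set.Icc (τ k) (τ (k+1)))).toReal
        ≤ (eVariationOn f (Set.Icc a b)).toReal / (n+1) := by
  set V := (eVariationOn f (Set.Icc a b)).toReal with hVdef
  set v : ℝ → ℝ := fun x => (eVariationOn f (Set.Icc a x)).toReal with hvdef
  have hV0 : 0 ≤ V := ENNReal.toReal_nonneg
  have hvadd : ∀ {x y : ℝ}, a ≤ x → x ≤ y → y ≤ b →
      v y = v x + (eVariationOn f (Set.Icc x y)).toReal := by
    intro x y hax hxy hyb
    have hsum := eVariationOn.Icc_add_Icc f (s := Set.univ) hax hxy (Set.mem_univ x)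
    simp only [Set.univ_inter] at hsum
    have hA : eVariationOn f (Set.Icc a x) ≠ ⊤ :=
      hBV.mono (Set.Icc_subset_Icc le_rfl (hxy.trans hyb))
    have hC : eVariationOn f (Set.Icc x y) ≠ ⊤ :=
      hBV.mono (Set.Icc_subset_Icc hax hyb)
    simp only [hvdef]
    rw [← hsum, ENNReal.toReal_add hA hC]
  have hva : v a = 0 := by
    simp only [hvdef, Set.Icc_self]
    rw [eVariationOn.subsingleton f Set.subsingleton_singleton]
    simp
  have hvb : v b = V := rfl
  have hvc := vfun_cont f hBV hfc
  set c : ℕ → ℝ := fun k => k * V / (n+1) with hcdef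
  have hc0 : c 0 = 0 := by simp [hcdef]
  have hcnonneg : ∀ k, 0 ≤ c k := fun k => by
    simp only [hcdef]; positivity
  have hcmono : Monotone c := fun i j h => by
    simp only [hcdef]
    rw [div_le_div_iff_of_pos_right (by positivity)]
    exact mul_le_mul_of_nonneg_right (Nat.cast_le.2 h) hV0
  have hclast : c (n+1) = V := by
    simp only [hcdef]
    push_cast
    field_simp
  have hcV : ∀ k, k ≤ n+1 → c k ≤ V := fun k hk => (hcmono hk).trans_eq hclast
  set S : ℕ → Set ℝ := fun k => {x | x ∈ Set.Icc a b ∧ c k ≤ v x} with hSdef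
  have hbS : ∀ k, k ≤ n+1 → b ∈ S k := fun k hk => ⟨⟨hab.le, le_rfl⟩, hcV k hk⟩
  have hSbdd : ∀ k, BddBelow (S k) := fun k => ⟨a, fun x hx => hx.1.1⟩
  set τ : ℕ → ℝ := fun k => if n+1 ≤ k then b else sInf (S k) with hτdef
  have hτlast : ∀ k, n+1 ≤ k → τ k = b := fun k hk => if_pos hk
  have hτS : ∀ k, k ≤ n → τ k ∈ S k := by
    intro k hk
    have hif : τ k = sInf (S k) := if_neg (by omega)
    have hne : (S k).Nonempty := ⟨b, hbS k (by omega)⟩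
    have hx₀ab : sInf (S k) ∈ Set.Icc a b :=
      ⟨le_csInf hne fun y hy => hy.1.1, csInf_le (hSbdd k) (hbS k (by omega))⟩
    rw [hif]
    refine ⟨hx₀ab, ?_⟩
    by_contra h
    push_neg at h
    obtain ⟨δ, hδ, hδv⟩ := hvc (sInf (S k)) hx₀ab (c k - v (sInf (S k))) (by linarith)
    obtain ⟨y, hyS, hylt⟩ := Real.lt_sInf_add_pos hne hδ
    have hy_ge : sInf (S k) ≤ y := csInf_le (hSbdd k) hyS
    have hdist : dist y (sInf (S k)) < δ := by
      rw [Real.dist_eq, abs_of_nonneg (by linarith)]; linarith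
    have h2 := hδv y hyS.1 hdist
    rw [Real.dist_eq, abs_lt] at h2
    have : v y < c k := by linarith [h2.2]
    exact absurd hyS.2 (not_le.2 this)
  have hτmem : ∀ k, τ k ∈ Set.Icc a b := by
    intro k
    by_cases h : n+1 ≤ k
    · rw [hτlast k h]; exact ⟨hab.le, le_rfl⟩
    · exact (hτS k (by omega)).1
  have hτvle : ∀ k, k ≤ n → v (τ k) ≤ c k := by
    intro k hk
    have hmem := (hτS k hk).1
    by_contra h
    push_neg at h
    have hane : a < τ k := by
      rcases lt_or_eq_of_le hmem.1 with h' | h'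
      · exact h'
      · exfalso; rw [← h', hva] at h; linarith [hcnonneg k]
    obtain ⟨δ, hδ, hδv⟩ := hvc (τ k) hmem (v (τ k) - c k) (by linarith)
    have hya : a ≤ max a (τ k - δ/2) := le_max_left _ _
    have hyx : max a (τ k - δ/2) < τ k := max_lt hane (by linarith)
    have hymem : max a (τ k - δ/2) ∈ Set.Icc a b := ⟨hya, hyx.le.trans hmem.2⟩
    have hdist : dist (max a (τ k - δ/2)) (τ k) < δ := by
      rw [Real.dist_eq, abs_of_nonpos (by linarith)]
      have : τ k - δ/2 ≤ max a (τ k - δ/2) := le_max_right _ _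
      linarith
    have h2 := hδv (max a (τ k - δ/2)) hymem hdist
    rw [Real.dist_eq, abs_lt] at h2
    have hvy : c k < v (max a (τ k - δ/2)) := by linarith [h2.1]
    have hle : τ k ≤ max a (τ k - δ/2) := by
      have hif : τ k = sInf (S k) := if_neg (by omega)
      exact le_of_eq_of_le hif (csInf_le (hSbdd k) ⟨hymem, hvy.le⟩)
    linarith
  have hτmono : Monotone τ := by
    refine monotone_nat_of_le_succ fun k => ?_
    by_cases h1 : n+1 ≤ k
    · rw [hτlast k h1, hτlast (k+1) (by omega)]
    · by_cases h2 : k = n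
      · rw [hτlast (k+1) (by omega)]
        exact (hτmem k).2
      · have hk : k + 1 ≤ n := by omega
        have hifk : τ k = sInf (S k) := if_neg (by omega)
        have hifk1 : τ (k+1) = sInf (S (k+1)) := if_neg (by omega)
        rw [hifk, hifk1]
        refine csInf_le_csInf (hSbdd k) ⟨b, hbS (k+1) (by omega)⟩ ?_
        intro x hx
        exact ⟨hx.1, (hcmono (Nat.le_succ k)).trans hx.2⟩
  have hτ0 : τ 0 = a := by
    have hif : τ 0 = sInf (S 0) := if_neg (by omega)
    have haS : a ∈ S 0 := ⟨⟨le_rfl, hab.le⟩, by rw [hc0, hva]⟩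
    exact le_antisymm (hif ▸ csInf_le (hSbdd 0) haS) (hτmem 0).1
  have hvle' : ∀ k, k ≤ n+1 → v (τ k) ≤ c k := by
    intro k hk
    rcases Nat.lt_or_ge k (n+1) with h | h
    · exact hτvle k (by omega)
    · have hk' : k = n+1 := by omega
      subst hk'
      rw [hτlast _ le_rfl, hclast]
  have hvge' : ∀ k, k ≤ n+1 → c k ≤ v (τ k) := by
    intro k hk
    rcases Nat.lt_or_ge k (n+1) with h | h
    · exact (hτS k (by omega)).2
    · have hk' : k = n+1 := by omega
      subst hk'
      rw [hτlast _ le_rfl, hclast]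
  refine ⟨τ, hτmono, hτ0, hτlast, hτmem, fun k hk => ?_⟩
  have h1 : a ≤ τ k := (hτmem k).1
  have h2 : τ k ≤ τ (k+1) := hτmono (Nat.le_succ k)
  have h3 : τ (k+1) ≤ b := (hτmem (k+1)).2
  have hadd := hvadd h1 h2 h3
  have heq : (eVariationOn f (Set.Icc (τ k) (τ (k+1)))).toReal
      = v (τ (k+1)) - v (τ k) := by linarith
  rw [heq]
  calc v (τ (k+1)) - v (τ k) ≤ c (k+1) - c k :=
        sub_le_sub (hvle' (k+1) (by omega)) (hvge' k (by omega))
    _ = V/(n+1) := by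
        simp only [hcdef]
        push_cast
        field_simp
        ring

/-- A continuous function of bounded variation on `[a,b]` can be uniformly
approximated within `V/(n+1)` by a continuous linear spline with `n` interior knots,
where `V` is the total variation of `f` on `[a,b]`. -/
theorem linear_spline_approx_bounded_variation
    (a b : ℝ) (hab : a < b) (f : ℝ → ℝ)
    (hfc : ContinuousOn f (Set.Icc a b))
    (hBV : BoundedVariationOn f (Set.Icc a b))
    (n : ℕ) (hn : 1 ≤ n) :
    ∃ (t : Fin (n + 2) → ℝ) (s : ℝ → ℝ),
      Monotone t ∧ t 0 = a ∧ t (Fin.last (n + 1)) = b ∧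
      ContinuousOn s (Set.Icc a b) ∧
      (∀ i : Fin (n + 1), ∃ p q : ℝ,
        ∀ x ∈ Set.Icc (t i.castSucc) (t i.succ), s x = p * x + q) ∧
      ∀ x ∈ Set.Icc a b,
        |f x - s x| ≤ (eVariationOn f (Set.Icc a b)).toReal / (n + 1) := by
  classical
  obtain ⟨τ, hτmono, hτ0, hτlast, hτmem, hτvar⟩ := knots_exist f hab hBV hfc n
  refine ⟨fun i => τ i.val, lsSpline f τ n, ?_, ?_, ?_, ?_, ?_, ?_⟩
  · intro i j hij
    exact hτmono (Fin.le_def.1 hij)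
  · show τ (0 : Fin (n+2)).val = a
    simp only [Fin.val_zero]
    exact hτ0
  · show τ (Fin.last (n+1)).val = b
    simp only [Fin.val_last]
    exact hτlast (n+1) le_rfl
  · exact (lsSpline_continuous f τ n).continuousOn
  · intro i
    refine ⟨lsSlope f τ i.val, f (τ i.val) - lsSlope f τ i.val * τ i.val, fun x hx => ?_⟩
    have hk : i.val ≤ n := Nat.lt_succ_iff.1 i.isLt
    have h1 : τ i.val ≤ x := hx.1
    have h2 : x ≤ τ (i.val + 1) := hx.2
    rw [lsSpline_eval f τ hτmono hk h1 h2]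
    ring
  · intro x hx
    set k := Nat.findGreatest (fun k => τ k ≤ x) n with hkdef
    have hk_le : k ≤ n := Nat.findGreatest_le n
    have hP0 : τ 0 ≤ x := by rw [hτ0]; exact hx.1
    have hkx : τ k ≤ x := Nat.findGreatest_spec (P := fun k => τ k ≤ x) (Nat.zero_le n) hP0
    have hxk1 : x ≤ τ (k+1) := by
      rcases Nat.lt_or_ge k n with h | h
      · by_contra hcon
        push_neg at hcon
        exact Nat.findGreatest_is_greatest (Nat.lt_succ_self k) (by omega) hcon.le
      · have hkn : k = n := by omega
        rw [hkn, hτlast (n+1) le_rfl]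
        exact hx.2
    have hD := hτvar k hk_le
    have hBVp : BoundedVariationOn f (Set.Icc (τ k) (τ (k+1))) :=
      hBV.mono (Set.Icc_subset_Icc (hτmem k).1 (hτmem (k+1)).2)
    have hττ : τ k ≤ τ (k+1) := hτmono (Nat.le_succ k)
    have hfl : |f x - f (τ k)| ≤ (eVariationOn f (Set.Icc a b)).toReal / (n + 1) := by
      have := hBVp.dist_le ⟨hkx, hxk1⟩ (Set.left_mem_Icc.2 hττ)
      rw [Real.dist_eq] at this
      exact this.trans hD
    have hfr : |f x - f (τ (k+1))| ≤ (eVariationOn f (Set.Icc a b)).toReal / (n + 1) := by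
      have := hBVp.dist_le ⟨hkx, hxk1⟩ (Set.right_mem_Icc.2 hττ)
      rw [Real.dist_eq] at this
      exact this.trans hD
    exact lsSpline_err f τ hτmono hk_le hkx hxk1
      (div_nonneg ENNReal.toReal_nonneg (by positivity)) hfl hfr
end

section
/- Let d ≥ 1 and n ≥ 1 be integers, let λ_1,…,λ_d ∈ (0,1], and let φ_0,…,φ_{2d} : [0,1] → [0,1] be continuous monotone increasing functions. Suppose f : [0,1]^d → ℝ satisfies f(x_1,…,x_d) = Σ_{q=0}^{2d} g(Σ_{i=1}^d λ_i φ_q(x_i)) for all x ∈ [0,1]^d, where g : [0,d] → ℝ is continuous. Then there exist continuous piecewise linear functions L_0,…,L_{2d} : [0,1] → ℝ, each with at most n breakpoints, and a continuous piecewise linear function S : ℝ → ℝ with at most dn+1 breakpoints, such that sup_{x ∈ [0,1]^d} | f(x) − Σ_{q=0}^{2d} S(Σ_{i=1}^d λ_i L_q(x_i)) | ≤ (2d+1)² ω(g, 1/n), where ω(g,h) := sup{ |g(s) − g(t)| : s, t ∈ [0,d], |s − t| ≤ h } is the modulus of continuity of g. -/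
/-- The modulus of continuity of `g` on `[0,D]` at scale `h`:
`ω(g,h) = sup { |g s − g t| : s,t ∈ [0,D], |s − t| ≤ h }`. -/
noncomputable def modCont (g : ℝ → ℝ) (D h : ℝ) : ℝ :=
  sSup {y | ∃ s ∈ Set.Icc (0 : ℝ) D, ∃ t ∈ Set.Icc (0 : ℝ) D, |s - t| ≤ h ∧ y = |g s - g t|}
noncomputable def pwl (m : ℕ) (u v : ℕ → ℝ) (t : ℝ) : ℝ :=
  v 0 + ∑ j ∈ Finset.range m,
    (v (j+1) - v j) / (u (j+1) - u j) * (min (max t (u j)) (u (j+1)) - u j)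

lemma pwl_continuous (m : ℕ) (u v : ℕ → ℝ) : Continuous (pwl m u v) := by
  unfold pwl
  refine continuous_const.add (continuous_finset_sum _ fun j _ => ?_)
  exact continuous_const.mul
    (((continuous_id.max continuous_const).min continuous_const).sub continuous_const)

lemma pwl_core (m : ℕ) (u v : ℕ → ℝ) (hu : Monotone u) (j : ℕ) (hj : j < m)
    (t : ℝ) (h1 : u j ≤ t) (h2 : t ≤ u (j+1)) :
    pwl m u v t = pwl m u v (u j) + (v (j+1) - v j) / (u (j+1) - u j) * (t - u j) := by
  classical
  unfold pwl
  have key : ∀ k ∈ Finset.range m,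
      (v (k+1) - v k) / (u (k+1) - u k) * (min (max t (u k)) (u (k+1)) - u k)
      = (v (k+1) - v k) / (u (k+1) - u k) * (min (max (u j) (u k)) (u (k+1)) - u k)
        + (if k = j then (v (j+1) - v j) / (u (j+1) - u j) * (t - u j) else 0) := by
    intro k _
    rcases lt_trichotomy k j with hkj | hkj | hkj
    · have h3 : u (k+1) ≤ u j := hu hkj
      have h4 : u k ≤ t := le_trans (le_trans (hu (Nat.le_succ k)) h3) h1
      have h5 : u (k+1) ≤ t := le_trans h3 h1
      have h6 : u k ≤ u j := le_trans (hu (Nat.le_succ k)) h3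
      rw [if_neg (Nat.ne_of_lt hkj), max_eq_left h4, max_eq_left h6,
        min_eq_right h5, min_eq_right h3]
      ring
    · subst hkj
      rw [if_pos rfl, max_eq_left h1, min_eq_left h2, max_self,
        min_eq_left (hu (Nat.le_succ k))]
      ring
    · have h3 : u (j+1) ≤ u k := hu hkj
      have h4 : t ≤ u k := le_trans h2 h3
      have h5 : u j ≤ u k := le_trans (hu (Nat.le_succ j)) h3
      rw [if_neg (Nat.ne_of_gt hkj), max_eq_right h4, max_eq_right h5]
      ring
  rw [Finset.sum_congr rfl key, Finset.sum_add_distrib,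
    Finset.sum_ite_eq' (Finset.range m) j, if_pos (Finset.mem_range.mpr hj)]
  ring
lemma pwl_node (m : ℕ) (u v : ℕ → ℝ) (hu : Monotone u)
    (hcons : ∀ k, k < m → u k = u (k+1) → v k = v (k+1))
    (i : ℕ) (hi : i ≤ m) : pwl m u v (u i) = v i := by
  unfold pwl
  have key : ∀ k ∈ Finset.range m,
      (v (k+1) - v k) / (u (k+1) - u k) * (min (max (u i) (u k)) (u (k+1)) - u k)
      = if k < i then v (k+1) - v k else 0 := by
    intro k hk
    rcases lt_or_ge k i with hki | hki
    · have h3 : u (k+1) ≤ u i := hu hki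
      have h6 : u k ≤ u i := le_trans (hu (Nat.le_succ k)) h3
      rw [if_pos hki, max_eq_left h6, min_eq_right h3]
      rcases eq_or_lt_of_le (hu (Nat.le_succ k)) with he | hlt
      · rw [hcons k (Finset.mem_range.mp hk) he, ← he]
        simp
      · exact div_mul_cancel₀ _ (sub_ne_zero.mpr (ne_of_gt hlt))
    · have h5 : u i ≤ u k := hu hki
      rw [if_neg (not_lt.mpr hki), max_eq_right h5, min_eq_left (hu (Nat.le_succ k))]
      ring
  rw [Finset.sum_congr rfl key,
    ← Finset.sum_subset (Finset.range_subset_range.mpr hi)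
      (fun x _ hx => if_neg (fun h => hx (Finset.mem_range.mpr h))),
    Finset.sum_congr rfl (fun x hx => if_pos (Finset.mem_range.mp hx)),
    Finset.sum_range_sub]
  ring

lemma pwl_left (m : ℕ) (u v : ℕ → ℝ) (hu : Monotone u)
    (t : ℝ) (h : t ≤ u 0) : pwl m u v t = v 0 := by
  unfold pwl
  have key : ∀ k ∈ Finset.range m,
      (v (k+1) - v k) / (u (k+1) - u k) * (min (max t (u k)) (u (k+1)) - u k) = 0 := by
    intro k _
    have h4 : t ≤ u k := le_trans h (hu (Nat.zero_le k))
    rw [max_eq_right h4, min_eq_left (hu (Nat.le_succ k))]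
    ring
  rw [Finset.sum_congr rfl key, Finset.sum_const_zero, add_zero]

lemma pwl_const_right (m : ℕ) (u v : ℕ → ℝ) (hu : Monotone u)
    (t : ℝ) (h : u m ≤ t) : pwl m u v t = pwl m u v (u m) := by
  unfold pwl
  congr 1
  refine Finset.sum_congr rfl fun k hk => ?_
  have h3 : u (k+1) ≤ u m := hu (Finset.mem_range.mp hk)
  have h4 : u k ≤ t := le_trans (le_trans (hu (Nat.le_succ k)) h3) h
  have h6 : u k ≤ u m := le_trans (hu (Nat.le_succ k)) h3
  rw [max_eq_left h4, max_eq_left h6, min_eq_right (le_trans h3 h), min_eq_right h3]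

lemma pwl_affineOn (m : ℕ) (u v : ℕ → ℝ) (hu : Monotone u) (x y : ℝ)
    (h : ∀ k ≤ m, u k ∉ Set.Ioo x y) :
    ∃ a b : ℝ, ∀ t ∈ Set.Icc x y, pwl m u v t = a * t + b := by
  classical
  rcases le_or_gt x y with hxy | hxy
  · rcases le_or_gt y (u 0) with h0 | h0
    · exact ⟨0, v 0, fun t ht => by
        rw [pwl_left m u v hu t (le_trans ht.2 h0)]; ring⟩
    · rcases le_or_gt (u m) x with hm | hm
      · exact ⟨0, pwl m u v (u m), fun t ht => by
          rw [pwl_const_right m u v hu t (le_trans hm ht.1)]; ring⟩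
      · have hu0 : u 0 ≤ x := by
          by_contra hc
          exact h 0 (Nat.zero_le m) ⟨not_le.mp hc, h0⟩
        set P : ℕ → Prop := fun k => u k ≤ x with hP
        have hP0 : P 0 := hu0
        set j := Nat.findGreatest P m with hj
        have hjle : j ≤ m := Nat.findGreatest_le m
        have hPj : P j := Nat.findGreatest_spec (Nat.zero_le m) hP0
        have hjm : j < m := by
          rcases lt_or_eq_of_le hjle with h' | h'
          · exact h'
          · exact absurd (h' ▸ hPj) (not_le.mpr hm)
        have hnot : ¬ P (j+1) :=
          Nat.findGreatest_is_greatest (Nat.lt_succ_self j) (Nat.succ_le_of_lt hjm)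
        have hyu : y ≤ u (j+1) := by
          by_contra hc
          exact h (j+1) (Nat.succ_le_of_lt hjm) ⟨not_le.mp hnot, not_le.mp hc⟩
        refine ⟨(v (j+1) - v j) / (u (j+1) - u j),
          pwl m u v (u j) - (v (j+1) - v j) / (u (j+1) - u j) * u j, fun t ht => ?_⟩
        rw [pwl_core m u v hu j hjm t (le_trans hPj ht.1) (le_trans ht.2 hyu)]
        ring
  · exact ⟨0, 0, fun t ht => absurd (le_trans ht.1 ht.2) (not_le.mpr hxy)⟩

lemma exists_nodes (n : ℕ) (hn : 1 ≤ n) (φ : ℝ → ℝ)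
    (hc : ContinuousOn φ (Set.Icc 0 1)) (hm : MonotoneOn φ (Set.Icc 0 1)) :
    ∃ U : ℕ → ℝ, Monotone U ∧ U 0 = 0 ∧ (∀ k, U k ∈ Set.Icc (0:ℝ) 1) ∧
      ∀ j ≤ n, φ (U j) = φ 0 + (j : ℝ) / n * (φ 1 - φ 0) := by
  have hn0 : (0:ℝ) < n := by exact_mod_cast hn
  have h01 : (0:ℝ) ∈ Set.Icc (0:ℝ) 1 := ⟨le_refl _, zero_le_one⟩
  have h11 : (1:ℝ) ∈ Set.Icc (0:ℝ) 1 := ⟨zero_le_one, le_refl _⟩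
  have hφ01 : φ 0 ≤ φ 1 := hm h01 h11 zero_le_one
  set v : ℕ → ℝ := fun j => φ 0 + (j : ℝ) / n * (φ 1 - φ 0) with hv
  have hΔ : 0 ≤ φ 1 - φ 0 := sub_nonneg.mpr hφ01
  have hvmono : Monotone v := by
    intro a b hab
    have hab' : (a:ℝ) ≤ b := by exact_mod_cast hab
    have h2 : (a:ℝ)/n ≤ (b:ℝ)/n := by gcongr
    simp only [hv]
    nlinarith
  set T : ℕ → Set ℝ := fun j => Set.Icc (0:ℝ) 1 ∩ φ ⁻¹' (Set.Ici (v j)) with hT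
  have hclosed : ∀ j, IsClosed (T j) :=
    fun j => hc.preimage_isClosed_of_isClosed isClosed_Icc isClosed_Ici
  have hvle : ∀ j ≤ n, v j ≤ φ 1 := by
    intro j hj
    have h1 : (j:ℝ)/n ≤ 1 := by
      rw [div_le_one hn0]; exact_mod_cast hj
    simp only [hv]
    nlinarith [mul_le_of_le_one_left hΔ h1]
  have hne : ∀ j ≤ n, (1:ℝ) ∈ T j := fun j hj => ⟨h11, hvle j hj⟩
  have hbdd : ∀ j, BddBelow (T j) := fun j => BddBelow.mono Set.inter_subset_left bddBelow_Icc
  set U : ℕ → ℝ := fun j => sInf (T (min j n)) with hU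
  have hmem : ∀ j, U j ∈ T (min j n) := fun j =>
    IsClosed.csInf_mem (hclosed _) ⟨1, hne _ (min_le_right j n)⟩ (hbdd _)
  have hUIcc : ∀ k, U k ∈ Set.Icc (0:ℝ) 1 := fun k => (hmem k).1
  have hUmono : Monotone U := by
    apply monotone_nat_of_le_succ
    intro k
    apply csInf_le_csInf (hbdd _) ⟨1, hne _ (min_le_right _ n)⟩
    intro t ht
    exact ⟨ht.1, le_trans (hvmono (min_le_min_right n (Nat.le_succ k))) ht.2⟩
  have hU0 : U 0 = 0 := by
    apply le_antisymm
    · apply csInf_le (hbdd _)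
      refine ⟨h01, ?_⟩
      simp [hT, hv]
    · exact le_csInf ⟨1, hne _ (min_le_right _ n)⟩ (fun t ht => ht.1.1)
  refine ⟨U, hUmono, hU0, hUIcc, fun j hj => ?_⟩
  have hmin : min j n = j := min_eq_left hj
  have hUj := hmem j
  rw [hmin] at hUj
  apply le_antisymm
  · -- φ (U j) ≤ v j
    rcases eq_or_lt_of_le (hUIcc j).1 with h0 | h0
    · rw [← h0]
      have : v 0 ≤ v j := hvmono (Nat.zero_le j)
      simpa [hv] using this
    · have hlim : Filter.Tendsto φ (nhdsWithin (U j) (Set.Ico 0 (U j))) (nhds (φ (U j))) :=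
        ((hc (U j) (hUIcc j)).mono (fun t ht => ⟨ht.1, le_trans (le_of_lt ht.2) (hUIcc j).2⟩))
      have hnb : (nhdsWithin (U j) (Set.Ico 0 (U j))).NeBot := by
        apply mem_closure_iff_nhdsWithin_neBot.mp
        rw [closure_Ico (ne_of_lt h0)]
        exact ⟨le_of_lt h0, le_refl _⟩
      apply le_of_tendsto hlim
      filter_upwards [self_mem_nhdsWithin] with t ht
      have htIcc : t ∈ Set.Icc (0:ℝ) 1 := ⟨ht.1, le_trans (le_of_lt ht.2) (hUIcc j).2⟩
      by_contra hcon
      have : t ∈ T (min j n) := by rw [hmin]; exact ⟨htIcc, le_of_lt (not_le.mp hcon)⟩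
      exact absurd (csInf_le (hbdd _) this) (not_le.mpr ht.2)
  · exact hUj.2

lemma exists_L (n : ℕ) (hn : 1 ≤ n) (φ : ℝ → ℝ)
    (hc : ContinuousOn φ (Set.Icc 0 1)) (hm : MonotoneOn φ (Set.Icc 0 1))
    (hmap : ∀ t ∈ Set.Icc (0:ℝ) 1, φ t ∈ Set.Icc (0:ℝ) 1) :
    ∃ L : ℝ → ℝ, PWLinOn L (Set.Icc 0 1) n ∧
      ∀ t ∈ Set.Icc (0:ℝ) 1, |L t - φ t| ≤ 1 / n ∧ L t ∈ Set.Icc (0:ℝ) 1 := by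
  classical
  have hn0 : (0:ℝ) < n := by exact_mod_cast hn
  have h01 : (0:ℝ) ∈ Set.Icc (0:ℝ) 1 := ⟨le_refl _, zero_le_one⟩
  have h11 : (1:ℝ) ∈ Set.Icc (0:ℝ) 1 := ⟨zero_le_one, le_refl _⟩
  have hφ01 : φ 0 ≤ φ 1 := hm h01 h11 zero_le_one
  have hΔ : 0 ≤ φ 1 - φ 0 := sub_nonneg.mpr hφ01
  obtain ⟨U, hUmono, hU0, hUIcc, hUval⟩ := exists_nodes n hn φ hc hm
  set v : ℕ → ℝ := fun j => φ 0 + (j : ℝ) / n * (φ 1 - φ 0) with hv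
  have hvmono : Monotone v := by
    intro a b hab
    have hab' : (a:ℝ) ≤ b := by exact_mod_cast hab
    have h2 : (a:ℝ)/n ≤ (b:ℝ)/n := by gcongr
    simp only [hv]; nlinarith
  have hvsucc : ∀ j : ℕ, v (j+1) - v j = (1/n) * (φ 1 - φ 0) := by
    intro j
    simp only [hv]
    push_cast
    field_simp
    ring
  have hcons : ∀ k, k < n → U k = U (k+1) → v k = v (k+1) := by
    intro k hk he
    simp only [hv]
    rw [← hUval k (le_of_lt hk), ← hUval (k+1) hk, he]
  set L : ℝ → ℝ := pwl n U v with hL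
  have hv0 : v 0 = φ 0 := by simp [hv]
  have hvn : v n = φ 1 := by
    simp only [hv]
    field_simp
    ring
  refine ⟨L, ⟨(pwl_continuous n U v).continuousOn,
      (Finset.range n).image (fun j => U (j+1)), ?_, ?_⟩, ?_⟩
  · exact le_trans Finset.card_image_le (le_of_eq (Finset.card_range n))
  · intro x hx y hy havoid
    apply pwl_affineOn n U v hUmono x y
    intro k hk hmem
    match k with
    | 0 =>
      rw [hU0] at hmem
      exact absurd hmem.1 (not_lt.mpr hx.1)
    | (k+1) =>
      exact havoid (U (k+1))
        (Finset.mem_image.mpr ⟨k, Finset.mem_range.mpr hk, rfl⟩) hmem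
  · intro t ht
    rcases le_or_gt (U n) t with hUn | hUn
    · have hLt : L t = v n := by
        rw [hL, pwl_const_right n U v hUmono t hUn, pwl_node n U v hUmono hcons n (le_refl n)]
      have h1 : φ (U n) ≤ φ t := hm (hUIcc n) ht hUn
      have h2 : φ t ≤ φ 1 := hm ht h11 ht.2
      rw [hUval n (le_refl n), div_self (ne_of_gt hn0), one_mul] at h1
      have hφt : φ t = φ 1 := le_antisymm h2 (by linarith)
      constructor
      · rw [hLt, hvn, hφt]
        simp only [sub_self, abs_zero]
        positivity
      · rw [hLt, hvn]; exact hmap 1 h11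
    · set P : ℕ → Prop := fun k => U k ≤ t with hP
      have hP0 : P 0 := by show U 0 ≤ t; rw [hU0]; exact ht.1
      set j := Nat.findGreatest P n with hj
      have hjle : j ≤ n := Nat.findGreatest_le n
      have hPj : U j ≤ t := Nat.findGreatest_spec (Nat.zero_le n) hP0
      have hjn : j < n := by
        rcases lt_or_eq_of_le hjle with h' | h'
        · exact h'
        · rw [← h'] at hUn
          exact absurd hPj (not_le.mpr hUn)
      have hnot : ¬ P (j+1) :=
        Nat.findGreatest_is_greatest (Nat.lt_succ_self j) (Nat.succ_le_of_lt hjn)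
      have htu : t ≤ U (j+1) := le_of_lt (not_le.mp hnot)
      have hLt : L t = v j + (v (j+1) - v j) / (U (j+1) - U j) * (t - U j) := by
        rw [hL, pwl_core n U v hUmono j hjn t hPj htu,
          pwl_node n U v hUmono hcons j (le_of_lt hjn)]
      have hslope : 0 ≤ (v (j+1) - v j) / (U (j+1) - U j) :=
        div_nonneg (sub_nonneg.mpr (hvmono (Nat.le_succ j))) (sub_nonneg.mpr (hUmono (Nat.le_succ j)))
      have hlow : v j ≤ L t := by
        rw [hLt]
        nlinarith [mul_nonneg hslope (sub_nonneg.mpr hPj)]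
      have hhigh : L t ≤ v (j+1) := by
        rcases eq_or_lt_of_le (hUmono (Nat.le_succ j)) with he | hlt
        · have : t = U j := le_antisymm (he ▸ htu) hPj
          rw [hLt, this]
          simp
          exact hvmono (Nat.le_succ j)
        · have hd0 : 0 < U (j+1) - U j := sub_pos.mpr hlt
          have : (v (j+1) - v j) / (U (j+1) - U j) * (t - U j)
              ≤ (v (j+1) - v j) / (U (j+1) - U j) * (U (j+1) - U j) :=
            mul_le_mul_of_nonneg_left (by linarith) hslope
          rw [div_mul_cancel₀ _ (ne_of_gt hd0)] at this
          rw [hLt]; linarith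
      have hφlow : v j ≤ φ t := by
        simp only [hv]
        rw [← hUval j hjle]
        exact hm (hUIcc j) ht hPj
      have hφhigh : φ t ≤ v (j+1) := by
        simp only [hv]
        rw [← hUval (j+1) hjn]
        exact hm ht (hUIcc (j+1)) htu
      have hwidth : v (j+1) - v j ≤ 1/n := by
        rw [hvsucc j]
        have hφ1 : φ 1 ≤ 1 := (hmap 1 h11).2
        have hφ0 : 0 ≤ φ 0 := (hmap 0 h01).1
        have h1n : 0 < 1/(n:ℝ) := by positivity
        nlinarith
      have t2 : L t - φ t ≤ v (j+1) - v j := by linarith [hhigh, hφlow]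
      have t3 : v j - v (j+1) ≤ L t - φ t := by linarith [hlow, hφhigh]
      have hup : L t - φ t ≤ 1/(n:ℝ) := le_trans t2 hwidth
      have hdn : -(1/(n:ℝ)) ≤ L t - φ t := by
        clear hj hnot
        clear_value L v P j
        clear hP hv hL hLt hcons hvsucc hvmono hv0 hvn
        linarith [t3, hwidth]
      constructor
      · rw [abs_le]
        exact ⟨hdn, hup⟩
      · constructor
        · have : v 0 ≤ v j := hvmono (Nat.zero_le j)
          have hφ0 : 0 ≤ φ 0 := (hmap 0 h01).1
          rw [hv0] at this; linarith
        · have : v (j+1) ≤ v n := hvmono hjn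
          have hφ1 : φ 1 ≤ 1 := (hmap 1 h11).2
          rw [hvn] at this; linarith


lemma modCont_facts (g : ℝ → ℝ) (D h : ℝ) (hD : 0 ≤ D) (hh : 0 ≤ h)
    (hg : ContinuousOn g (Set.Icc 0 D)) :
    0 ≤ modCont g D h ∧
    ∀ s ∈ Set.Icc (0:ℝ) D, ∀ t ∈ Set.Icc (0:ℝ) D, |s - t| ≤ h →
      |g s - g t| ≤ modCont g D h := by
  obtain ⟨M, hM⟩ := (isCompact_Icc).exists_bound_of_continuousOn hg
  have hbdd : BddAbove {y | ∃ s ∈ Set.Icc (0 : ℝ) D, ∃ t ∈ Set.Icc (0 : ℝ) D,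
      |s - t| ≤ h ∧ y = |g s - g t|} := by
    refine ⟨2 * M, fun y hy => ?_⟩
    obtain ⟨s, hs, t, ht, _, rfl⟩ := hy
    calc |g s - g t| ≤ |g s| + |g t| := abs_sub _ _
      _ ≤ M + M := add_le_add (hM s hs) (hM t ht)
      _ = 2 * M := by ring
  have hkey : ∀ s ∈ Set.Icc (0:ℝ) D, ∀ t ∈ Set.Icc (0:ℝ) D, |s - t| ≤ h →
      |g s - g t| ≤ modCont g D h := by
    intro s hs t ht hst
    exact le_csSup hbdd ⟨s, hs, t, ht, hst, rfl⟩
  have h0D : (0:ℝ) ∈ Set.Icc (0:ℝ) D := ⟨le_refl _, hD⟩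
  refine ⟨?_, hkey⟩
  have := hkey 0 h0D 0 h0D (by simpa using hh)
  simpa using this

lemma modCont_chain (g : ℝ → ℝ) (D : ℝ) (n : ℕ) (hn : 1 ≤ n) (hD : 0 ≤ D)
    (hg : ContinuousOn g (Set.Icc 0 D)) :
    ∀ m : ℕ, ∀ s ∈ Set.Icc (0:ℝ) D, ∀ t ∈ Set.Icc (0:ℝ) D, |s - t| ≤ (m : ℝ) / n →
      |g s - g t| ≤ (m : ℝ) * modCont g D (1/n) := by
  have hn0 : (0:ℝ) < n := by exact_mod_cast hn
  have h1n : (0:ℝ) ≤ 1/n := by positivity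
  obtain ⟨hω0, hkey⟩ := modCont_facts g D (1/n) hD h1n hg
  -- symmetric-in-(s,t) auxiliary statement, by induction on m, for s ≤ t
  have main : ∀ m : ℕ, ∀ s ∈ Set.Icc (0:ℝ) D, ∀ t ∈ Set.Icc (0:ℝ) D, s ≤ t →
      t - s ≤ (m : ℝ) / n → |g s - g t| ≤ (m : ℝ) * modCont g D (1/n) := by
    intro m
    induction m with
    | zero =>
      intro s hs t ht hst hle
      have : s = t := le_antisymm hst (by simpa using hle)
      simp [this]
    | succ m ih =>
      intro s hs t ht hst hle
      rcases le_or_gt (t - s) (1/(n:ℝ)) with hcase | hcase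
      · have := hkey s hs t ht (by rw [abs_sub_comm, abs_of_nonneg (by linarith)]; exact hcase)
        have hm1 : (1:ℝ) ≤ (m:ℝ) + 1 := by have : (0:ℝ) ≤ (m:ℝ) := Nat.cast_nonneg m; linarith
        calc |g s - g t| ≤ modCont g D (1/n) := this
          _ ≤ ((m:ℝ) + 1) * modCont g D (1/n) := by nlinarith
          _ = ((m+1 : ℕ) : ℝ) * modCont g D (1/n) := by push_cast; ring
      · set t' := t - 1/(n:ℝ) with ht'
        have hst' : s ≤ t' := by
          have : 1/(n:ℝ) < t - s := hcase
          simp only [ht']; linarith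
        have ht'D : t' ∈ Set.Icc (0:ℝ) D := by
          constructor
          · linarith [hs.1]
          · simp only [ht']; linarith [ht.2, le_of_lt (one_div_pos.mpr hn0)]
        have h1 : |g s - g t'| ≤ (m:ℝ) * modCont g D (1/n) := by
          apply ih s hs t' ht'D hst'
          have : ((m+1 : ℕ) : ℝ) / n = (m:ℝ)/n + 1/n := by push_cast; ring
          rw [this] at hle
          simp only [ht']; linarith
        have h2 : |g t' - g t| ≤ modCont g D (1/n) := by
          apply hkey t' ht'D t ht
          rw [abs_of_nonpos (by simp only [ht']; linarith [le_of_lt (one_div_pos.mpr hn0)])]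
          simp only [ht']; linarith
        calc |g s - g t| = |(g s - g t') + (g t' - g t)| := by ring_nf
          _ ≤ |g s - g t'| + |g t' - g t| := abs_add_le _ _
          _ ≤ (m:ℝ) * modCont g D (1/n) + modCont g D (1/n) := add_le_add h1 h2
          _ = ((m+1 : ℕ) : ℝ) * modCont g D (1/n) := by push_cast; ring
  intro m s hs t ht hst
  rcases le_total s t with h | h
  · exact main m s hs t ht h (le_trans (le_abs_self _) (by rwa [abs_sub_comm] at hst))
  · rw [abs_sub_comm]
    exact main m t ht s hs h (le_trans (le_abs_self _) (by rwa [abs_sub_comm] at hst ⊢))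

lemma findCell (m : ℕ) (u : ℕ → ℝ) (y : ℝ) (h0 : u 0 ≤ y) (hm : y < u m) :
    ∃ j, j < m ∧ u j ≤ y ∧ y ≤ u (j+1) := by
  classical
  have hspec : u (Nat.findGreatest (fun k => u k ≤ y) m) ≤ y :=
    Nat.findGreatest_spec (P := fun k => u k ≤ y) (Nat.zero_le m) h0
  have hlt : Nat.findGreatest (fun k => u k ≤ y) m < m := by
    rcases lt_or_eq_of_le (Nat.findGreatest_le (P := fun k => u k ≤ y) m) with h | h
    · exact h
    · rw [h] at hspec
      exact absurd hspec (not_le.mpr hm)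
  refine ⟨Nat.findGreatest (fun k => u k ≤ y) m, hlt, hspec, ?_⟩
  exact le_of_lt (not_le.mp
    (Nat.findGreatest_is_greatest (Nat.lt_succ_self _) (Nat.succ_le_of_lt hlt)))

lemma exists_S (d n : ℕ) (hd : 1 ≤ d) (hn : 1 ≤ n) (g : ℝ → ℝ)
    (hg : ContinuousOn g (Set.Icc 0 (d:ℝ))) :
    ∃ S : ℝ → ℝ, PWLinOn S Set.univ (d * n + 1) ∧
      ∀ y ∈ Set.Icc (0:ℝ) (d:ℝ), |S y - g y| ≤ 2 * modCont g (d:ℝ) (1/n) := by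
  have hn0 : (0:ℝ) < n := by exact_mod_cast hn
  have hd0 : (0:ℝ) ≤ d := by positivity
  obtain ⟨hω0, hkey⟩ := modCont_facts g d (1/n) hd0 (by positivity) hg
  set ω := modCont g (d:ℝ) (1/n) with hω
  set m := d * n with hm
  set u : ℕ → ℝ := fun j => (j:ℝ)/n with hu
  set v : ℕ → ℝ := fun j => g ((j:ℝ)/n) with hv
  have humono : Monotone u := by
    apply monotone_nat_of_le_succ
    intro k
    simp only [hu]
    rw [div_le_div_iff_of_pos_right hn0]
    push_cast; linarith
  have husucc : ∀ j : ℕ, u (j+1) - u j = 1/(n:ℝ) := by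
    intro j
    simp only [hu]
    push_cast
    field_simp
    ring
  have hcons : ∀ k, k < m → u k = u (k+1) → v k = v (k+1) := by
    intro k _ he
    exfalso
    have := husucc k
    rw [he] at this
    simp at this
    exact absurd this (ne_of_gt hn0).symm
  have hum : u m = (d:ℝ) := by
    simp only [hu, hm]
    push_cast
    field_simp
  have hu0 : u 0 = 0 := by simp [hu]
  have huIcc : ∀ k ≤ m, u k ∈ Set.Icc (0:ℝ) (d:ℝ) := by
    intro k hk
    constructor
    · simp only [hu]; positivity
    · rw [← hum]; exact humono hk
  refine ⟨pwl m u v, ⟨(pwl_continuous m u v).continuousOn,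
      (Finset.range (m+1)).image (fun j => u j), ?_, ?_⟩, ?_⟩
  · exact le_trans Finset.card_image_le (le_of_eq (Finset.card_range (m+1)))
  · intro x _ y _ havoid
    apply pwl_affineOn m u v humono x y
    intro k hk
    exact havoid (u k) (Finset.mem_image.mpr ⟨k, Finset.mem_range.mpr (Nat.lt_succ_of_le hk), rfl⟩)
  · intro y hy
    rcases le_or_gt (u m) y with hcase | hcase
    · have hyd : y = (d:ℝ) := le_antisymm hy.2 (hum ▸ hcase)
      rw [pwl_const_right m u v humono y hcase,
        pwl_node m u v humono hcons m (le_refl m)]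
      have : v m = g y := by rw [hv, hyd]; simp only []; rw [← hum, hu]
      rw [this]
      simp only [sub_self, abs_zero]
      linarith
    · obtain ⟨j, hjm, hjy, hyj⟩ := findCell m u y (hu0 ▸ hy.1) hcase
      rw [pwl_core m u v humono j hjm y hjy hyj,
        pwl_node m u v humono hcons j (le_of_lt hjm)]
      have hden := husucc j
      have h1n : (0:ℝ) < 1/n := by positivity
      have hjIcc : u j ∈ Set.Icc (0:ℝ) (d:ℝ) := huIcc j (le_of_lt hjm)
      have hj1Icc : u (j+1) ∈ Set.Icc (0:ℝ) (d:ℝ) := huIcc (j+1) hjm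
      have hb1 : |v (j+1) - v j| ≤ ω := by
        have : v (j+1) = g (u (j+1)) := by rw [hv, hu]
        rw [this]
        have : v j = g (u j) := by rw [hv, hu]
        rw [this]
        apply hkey _ hj1Icc _ hjIcc
        rw [abs_of_nonneg (by linarith)]
        linarith
      have hb2 : |g (u j) - g y| ≤ ω := by
        apply hkey _ hjIcc _ hy
        rw [abs_of_nonpos (by linarith)]
        linarith
      have hb3 : |(v (j+1) - v j) / (u (j+1) - u j) * (y - u j)| ≤ ω := by
        rw [hden, abs_mul, abs_div]
        rw [abs_of_pos h1n, abs_of_nonneg (by linarith : (0:ℝ) ≤ y - u j)]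
        calc |v (j+1) - v j| / (1/(n:ℝ)) * (y - u j)
            ≤ |v (j+1) - v j| / (1/(n:ℝ)) * (1/(n:ℝ)) := by
              apply mul_le_mul_of_nonneg_left (by linarith) (by positivity)
          _ = |v (j+1) - v j| := div_mul_cancel₀ _ (ne_of_gt h1n)
          _ ≤ ω := hb1
      have hvj : v j = g (u j) := by rw [hv, hu]
      calc |v j + (v (j+1) - v j) / (u (j+1) - u j) * (y - u j) - g y|
          = |(v (j+1) - v j) / (u (j+1) - u j) * (y - u j) + (g (u j) - g y)| := by
            rw [hvj]; ring_nf
        _ ≤ |(v (j+1) - v j) / (u (j+1) - u j) * (y - u j)| + |g (u j) - g y| := abs_add_le _ _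
        _ ≤ ω + ω := add_le_add hb3 hb2
        _ = 2 * ω := by ring


/-- If `f` has a Kolmogorov representation with continuous outer function
`g`, then the Kolmogorov ReLU network `K_{n,n}` approximates `f` uniformly within
`(2d+1)² ω(g, 1/n)`, where `ω` is the modulus of continuity of `g` on `[0,d]`. -/
theorem kolmogorov_network_modulus_rate
    (d n : ℕ) (hd : 1 ≤ d) (hn : 1 ≤ n)
    (lam : Fin d → ℝ) (hlam : ∀ i, lam i ∈ Set.Ioc (0 : ℝ) 1)
    (φ : Fin (2 * d + 1) → ℝ → ℝ)
    (hφc : ∀ q, ContinuousOn (φ q) (Set.Icc 0 1))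
    (hφm : ∀ q, MonotoneOn (φ q) (Set.Icc 0 1))
    (hφmap : ∀ q, ∀ t ∈ Set.Icc (0 : ℝ) 1, φ q t ∈ Set.Icc (0 : ℝ) 1)
    (g : ℝ → ℝ) (hg : ContinuousOn g (Set.Icc 0 (d : ℝ)))
    (f : (Fin d → ℝ) → ℝ)
    (hf : ∀ x ∈ Set.Icc (0 : Fin d → ℝ) 1,
      f x = ∑ q : Fin (2 * d + 1), g (∑ i, lam i * φ q (x i))) :
    ∃ (L : Fin (2 * d + 1) → ℝ → ℝ) (S : ℝ → ℝ),
      (∀ q, PWLinOn (L q) (Set.Icc 0 1) n) ∧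
      PWLinOn S Set.univ (d * n + 1) ∧
      ∀ x ∈ Set.Icc (0 : Fin d → ℝ) 1,
        |f x - ∑ q : Fin (2 * d + 1), S (∑ i, lam i * L q (x i))| ≤
          (2 * (d : ℝ) + 1) ^ 2 * modCont g (d : ℝ) (1 / n) := by
  have hn0 : (0:ℝ) < n := by exact_mod_cast hn
  have hd1 : (1:ℝ) ≤ d := by exact_mod_cast hd
  have hd0 : (0:ℝ) ≤ d := by linarith
  obtain ⟨hω0, hkey⟩ := modCont_facts g d (1/n) hd0 (by positivity) hg
  have hchain := modCont_chain g d n hn hd0 hg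
  choose L hLpw hLapprox using fun q : Fin (2*d+1) =>
    exists_L n hn (φ q) (hφc q) (hφm q) (hφmap q)
  obtain ⟨S, hSpw, hSapprox⟩ := exists_S d n hd hn g hg
  refine ⟨L, S, hLpw, hSpw, ?_⟩
  intro x hx
  have hxi : ∀ i, x i ∈ Set.Icc (0:ℝ) 1 := by
    rw [Set.mem_Icc] at hx
    exact fun i => ⟨hx.1 i, hx.2 i⟩
  have hsum : ∀ w : Fin d → ℝ, (∀ i, w i ∈ Set.Icc (0:ℝ) 1) →
      (∑ i, lam i * w i) ∈ Set.Icc (0:ℝ) (d:ℝ) := by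
    intro w hw
    constructor
    · exact Finset.sum_nonneg fun i _ => mul_nonneg (le_of_lt (hlam i).1) (hw i).1
    · calc ∑ i, lam i * w i ≤ ∑ _i : Fin d, (1:ℝ) :=
            Finset.sum_le_sum fun i _ =>
              mul_le_one₀ (hlam i).2 (hw i).1 (hw i).2
        _ = (d:ℝ) := by simp
  have hq : ∀ q : Fin (2*d+1),
      |g (∑ i, lam i * φ q (x i)) - S (∑ i, lam i * L q (x i))| ≤
        ((d:ℝ) + 2) * modCont g (d:ℝ) (1/n) := by
    intro q
    have hy' : (∑ i, lam i * φ q (x i)) ∈ Set.Icc (0:ℝ) (d:ℝ) :=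
      hsum _ (fun i => hφmap q (x i) (hxi i))
    have hy : (∑ i, lam i * L q (x i)) ∈ Set.Icc (0:ℝ) (d:ℝ) :=
      hsum _ (fun i => (hLapprox q (x i) (hxi i)).2)
    have hdiff : |(∑ i, lam i * φ q (x i)) - (∑ i, lam i * L q (x i))| ≤ (d:ℝ)/n := by
      rw [← Finset.sum_sub_distrib]
      calc |∑ i, (lam i * φ q (x i) - lam i * L q (x i))|
          ≤ ∑ i, |lam i * φ q (x i) - lam i * L q (x i)| :=
            Finset.abs_sum_le_sum_abs _ _
        _ ≤ ∑ _i : Fin d, 1/(n:ℝ) := by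
            apply Finset.sum_le_sum
            intro i _
            rw [← mul_sub, abs_mul]
            calc |lam i| * |φ q (x i) - L q (x i)| ≤ 1 * (1/(n:ℝ)) := by
                  apply mul_le_mul
                  · rw [abs_of_pos (hlam i).1]; exact (hlam i).2
                  · rw [abs_sub_comm]; exact (hLapprox q (x i) (hxi i)).1
                  · positivity
                  · linarith
              _ = 1/(n:ℝ) := one_mul _
        _ = (d:ℝ)/n := by
            rw [Finset.sum_const, Finset.card_univ, Fintype.card_fin, nsmul_eq_mul]
            ring
    have h1 : |g (∑ i, lam i * φ q (x i)) - g (∑ i, lam i * L q (x i))| ≤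
        (d:ℝ) * modCont g (d:ℝ) (1/n) := hchain d _ hy' _ hy hdiff
    have h2 : |S (∑ i, lam i * L q (x i)) - g (∑ i, lam i * L q (x i))| ≤
        2 * modCont g (d:ℝ) (1/n) := hSapprox _ hy
    calc |g (∑ i, lam i * φ q (x i)) - S (∑ i, lam i * L q (x i))|
        = |(g (∑ i, lam i * φ q (x i)) - g (∑ i, lam i * L q (x i))) -
            (S (∑ i, lam i * L q (x i)) - g (∑ i, lam i * L q (x i)))| := by ring_nf
      _ ≤ |g (∑ i, lam i * φ q (x i)) - g (∑ i, lam i * L q (x i))| +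
            |S (∑ i, lam i * L q (x i)) - g (∑ i, lam i * L q (x i))| := abs_sub _ _
      _ ≤ (d:ℝ) * modCont g (d:ℝ) (1/n) + 2 * modCont g (d:ℝ) (1/n) := add_le_add h1 h2
      _ = ((d:ℝ) + 2) * modCont g (d:ℝ) (1/n) := by ring
  rw [hf x hx, ← Finset.sum_sub_distrib]
  calc |∑ q : Fin (2*d+1), (g (∑ i, lam i * φ q (x i)) - S (∑ i, lam i * L q (x i)))|
      ≤ ∑ q : Fin (2*d+1), |g (∑ i, lam i * φ q (x i)) - S (∑ i, lam i * L q (x i))| :=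
        Finset.abs_sum_le_sum_abs _ _
    _ ≤ ∑ _q : Fin (2*d+1), ((d:ℝ) + 2) * modCont g (d:ℝ) (1/n) :=
        Finset.sum_le_sum fun q _ => hq q
    _ = ((2*d+1 : ℕ) : ℝ) * (((d:ℝ) + 2) * modCont g (d:ℝ) (1/n)) := by
        rw [Finset.sum_const, Finset.card_univ, Fintype.card_fin, nsmul_eq_mul]
    _ ≤ (2 * (d : ℝ) + 1) ^ 2 * modCont g (d : ℝ) (1 / n) := by
        push_cast
        nlinarith [mul_nonneg (mul_nonneg
          (by linarith : (0:ℝ) ≤ 2*(d:ℝ)+1) (by linarith : (0:ℝ) ≤ (d:ℝ)-1)) hω0]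
end

section
/- Let N ≥ 1 be an integer and for v ∈ ℝ^N define ‖v‖_P := sqrt( (1/N) Σ_{i=1}^N v_i² ). Let V ⊆ ℝ^N, let E : ℝ^N → ℝ satisfy E(v) ≥ 0 for all v, let λ ≥ 0 and B ≥ 0 be real numbers, let f, e ∈ ℝ^N, and set z = f + e. Suppose s* ∈ V minimizes the penalized least squares objective over V, i.e., ‖z − s*‖_P² + λ E(s*) ≤ ‖z − s‖_P² + λ E(s) for all s ∈ V, and suppose there exists s_f ∈ V with ‖f − s_f‖_P ≤ B and E(s_f) ≤ E(f). Then ‖f − s*‖_P ≤ B + 2‖e‖_P + sqrt(λ E(f)). -/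
/-! Only the triangle inequality of `‖·‖_P` is needed. With `z = f + e`, minimality against the
competitor `s_f` and `‖z - s_f‖_P ≤ ‖f - s_f‖_P + ‖e‖_P` give
`‖z - s*‖_P² ≤ (B + ‖e‖_P)² + λE(f) ≤ (B + ‖e‖_P + √(λE(f)))²`, and then
`‖f - s*‖_P ≤ ‖z - s*‖_P + ‖e‖_P`. -/

/-- The rooted mean squares (RMS) seminorm of a vector in `ℝ^N`:
`‖v‖_P = sqrt((1/N) Σ_i v_i²)`. -/
noncomputable def rmsNorm {N : ℕ} (v : Fin N → ℝ) : ℝ :=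
  Real.sqrt ((1 / (N : ℝ)) * ∑ i, (v i) ^ 2)

lemma le_add_sqrt_of_sq_le_sq_add {a b c : ℝ} (hb : 0 ≤ b) (hc : 0 ≤ c)
    (h : a ^ 2 ≤ b ^ 2 + c) : a ≤ b + √c := by
  have hsq : a ^ 2 ≤ (b + √c) ^ 2 := by
    nlinarith [Real.sq_sqrt hc, Real.sqrt_nonneg c]
  exact le_of_abs_le (abs_le_of_sq_le_sq hsq (by positivity))

namespace AddGroupSeminorm

variable {X : Type*} [AddCommGroup X] (p : AddGroupSeminorm X)

theorem penalized_fit_error_le {f e s t : X} {P Q : ℝ} (hP : 0 ≤ P) (hQ : 0 ≤ Q)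
    (hfit : p (f + e - s) ^ 2 + P ≤ p (f + e - t) ^ 2 + Q) :
    p (f - s) ≤ p (f - t) + 2 * p e + √Q := by
  have hcompetitor : p (f + e - t) ≤ p (f - t) + p e := by
    simpa only [sub_add_eq_add_sub] using map_add_le_add p (f - t) e
  have hfit_sq : p (f + e - s) ^ 2 ≤ (p (f - t) + p e) ^ 2 + Q := by
    have := pow_le_pow_left₀ (apply_nonneg p _) hcompetitor 2
    linarith
  have hfit' := le_add_sqrt_of_sq_le_sq_add (by positivity) hQ hfit_sq
  calc p (f - s) = p (f + e - s - e) := by rw [add_sub_right_comm, add_sub_cancel_right]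
    _ ≤ p (f + e - s) + p e := map_sub_le_add p _ _
    _ ≤ p (f - t) + 2 * p e + √Q := by linarith

end AddGroupSeminorm

lemma rmsNorm_eq_mul_norm {N : ℕ} (v : Fin N → ℝ) :
    rmsNorm v = √(1 / (N : ℝ)) * ‖WithLp.toLp 2 v‖ := by
  rw [rmsNorm, EuclideanSpace.norm_eq, ← Real.sqrt_mul (by positivity)]
  simp only [Real.norm_eq_abs, sq_abs]

noncomputable def rmsSeminorm (N : ℕ) : AddGroupSeminorm (Fin N → ℝ) where
  toFun := rmsNorm
  map_zero' := by simp [rmsNorm]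
  add_le' a b := by
    simp only [rmsNorm_eq_mul_norm, WithLp.toLp_add, ← mul_add]
    exact mul_le_mul_of_nonneg_left (norm_add_le _ _) (Real.sqrt_nonneg _)
  neg' v := by simp [rmsNorm_eq_mul_norm, WithLp.toLp_neg]

@[simp]
lemma rmsSeminorm_apply {N : ℕ} (v : Fin N → ℝ) : rmsSeminorm N v = rmsNorm v := rfl

theorem penalized_least_squares_error_general
    (N : ℕ)
    (V : Set (Fin N → ℝ)) (E : (Fin N → ℝ) → ℝ) (hE : ∀ v, 0 ≤ E v)
    (lam B : ℝ) (hlam : 0 ≤ lam)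
    (f e : Fin N → ℝ)
    (sStar : Fin N → ℝ)
    (hmin : ∀ s ∈ V,
      rmsNorm (f + e - sStar) ^ 2 + lam * E sStar ≤ rmsNorm (f + e - s) ^ 2 + lam * E s)
    (sf : Fin N → ℝ) (hsfV : sf ∈ V)
    (hsfB : rmsNorm (f - sf) ≤ B) (hsfE : E sf ≤ E f) :
    rmsNorm (f - sStar) ≤ B + 2 * rmsNorm e + Real.sqrt (lam * E f) := by
  have hpenalty : lam * E sf ≤ lam * E f := mul_le_mul_of_nonneg_left hsfE hlam
  have hfit : rmsSeminorm N (f + e - sStar) ^ 2 + lam * E sStar ≤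
      rmsSeminorm N (f + e - sf) ^ 2 + lam * E f := by
    simp only [rmsSeminorm_apply]
    linarith [hmin sf hsfV]
  have hbound := (rmsSeminorm N).penalized_fit_error_le (mul_nonneg hlam (hE sStar))
    (mul_nonneg hlam (hE f)) hfit
  simp only [rmsSeminorm_apply] at hbound
  linarith

/-- abstract error bound for penalized least squares fitting. If `s*`
minimizes `‖z − s‖_P² + λE(s)` over `V` with `z = f + e`, and some `s_f ∈ V` satisfies
`‖f − s_f‖_P ≤ B` and `E(s_f) ≤ E(f)`, then `‖f − s*‖_P ≤ B + 2‖e‖_P + sqrt(λE(f))`. -/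
theorem penalized_least_squares_error
    (N : ℕ) (hN : 1 ≤ N)
    (V : Set (Fin N → ℝ)) (E : (Fin N → ℝ) → ℝ) (hE : ∀ v, 0 ≤ E v)
    (lam B : ℝ) (hlam : 0 ≤ lam) (hB : 0 ≤ B)
    (f e : Fin N → ℝ)
    (sStar : Fin N → ℝ) (hsStarV : sStar ∈ V)
    (hmin : ∀ s ∈ V,
      rmsNorm (f + e - sStar) ^ 2 + lam * E sStar ≤ rmsNorm (f + e - s) ^ 2 + lam * E s)
    (sf : Fin N → ℝ) (hsfV : sf ∈ V)
    (hsfB : rmsNorm (f - sf) ≤ B) (hsfE : E sf ≤ E f) :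
    rmsNorm (f - sStar) ≤ B + 2 * rmsNorm e + Real.sqrt (lam * E f) :=
  penalized_least_squares_error_general N V E hE lam B hlam f e sStar hmin sf hsfV hsfB hsfE
end
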